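/- arXiv:1105.2160 — 9 statements merged into one kernel-verified Lean document; each statement's English description precedes it below -/
import Mathlib

section
/- For every n ≥ 1 the matrix Δ_n is invertible, and the matrix (conj(Δ_n))^{-1} Δ_n (equivalently Δ_n^{-*} Δ_n, since Δ_n is symmetric) is similar to the Jordan block J_n(1). -/
open Matrix

/-- The `n×n` upper-triangular Jordan block with eigenvalue `l`. -/
noncomputable def Jmat (n : ℕ) (l : ℂ) : Matrix (Fin n) (Fin n) ℂ :=
  Matrix.of fun i j =>
    if (i : ℕ) = (j : ℕ) then l
    else if (j : ℕ) = (i : ℕ) + 1 then 1 else 0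

/-- The symmetric matrix `Δ_n`: (1-based) entry `(j,k)` is `1` if `j+k = n+1`,
`i` if `j+k = n+2`, and `0` otherwise. -/
noncomputable def Dmat (n : ℕ) : Matrix (Fin n) (Fin n) ℂ :=
  Matrix.of fun i j =>
    if (i : ℕ) + (j : ℕ) + 1 = n then 1
    else if (i : ℕ) + (j : ℕ) = n then Complex.I
    else 0

/-- The `2m×2m` block matrix `H_m(l) = [[0, I],[J_m(l), 0]]`. -/
noncomputable def Hmat (m : ℕ) (l : ℂ) : Matrix (Fin m ⊕ Fin m) (Fin m ⊕ Fin m) ℂ :=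
  Matrix.fromBlocks 0 1 (Jmat m l) 0

/-- `T(A) = {CᴴA + AC}`, the tangent space to the *congruence class of `A`. -/
def Tset {n : Type*} [Fintype n] (A : Matrix n n ℂ) : Set (Matrix n n ℂ) :=
  {X | ∃ C : Matrix n n ℂ, X = Cᴴ * A + A * C}

/-- `T(M,N) = {(SᴴM + NR, RᴴN + MS)}`. -/
def Tpair {p q : Type*} [Fintype p] [Fintype q]
    (M : Matrix p p ℂ) (N : Matrix q q ℂ) :
    Set (Matrix q p ℂ × Matrix p q ℂ) :=
  {X | ∃ (S : Matrix p q ℂ) (R : Matrix q p ℂ),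
      X = (Sᴴ * M + N * R, Rᴴ * N + M * S)}

/-! Writing `N = J_n(0)` and `R` for the exchange matrix, `Δ_n = R (1 + iN)` and
`conj Δ_n = R (1 - iN)`, so `(conj Δ_n)⁻¹ Δ_n = (1 - iN)⁻¹ (1 + iN)` is the Cayley transform of `N`.
For `c ≠ 0` the upper triangular matrix `P` whose `j`-th column is `((1 - cN) / (2c))^j e_j` satisfies
`(1 + cN) P = (1 - cN) P J_n(1)`; entrywise this is Pascal's rule for its binomial entries. -/

lemma Jmat_eq_smul_one_add (n : ℕ) (l : ℂ) : Jmat n l = l • 1 + Jmat n 0 := by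
  ext i j
  simp only [Jmat, of_apply, Matrix.add_apply, Matrix.smul_apply, one_apply, Fin.ext_iff,
    smul_eq_mul]
  split_ifs <;> first | omega | simp

lemma Jmat_zero_mul_apply {n : ℕ} (M : Matrix (Fin n) (Fin n) ℂ) (i j : Fin n) :
    (Jmat n 0 * M) i j = if h : (i : ℕ) + 1 < n then M ⟨i + 1, h⟩ j else 0 := by
  rw [mul_apply]
  split_ifs with h
  · rw [Finset.sum_eq_single ⟨i + 1, h⟩]
    · simp [Jmat]
    · intro k _ hk
      have : (k : ℕ) ≠ i + 1 := fun e => hk (Fin.ext e)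
      simp [Jmat, this]
    · simp
  · refine Finset.sum_eq_zero fun k _ => ?_
    have : (k : ℕ) ≠ i + 1 := by omega
    simp [Jmat, this]

lemma mul_Jmat_zero_apply {n : ℕ} (M : Matrix (Fin n) (Fin n) ℂ) (i j : Fin n) :
    (M * Jmat n 0) i j = if h : 0 < (j : ℕ) then M i ⟨j - 1, by omega⟩ else 0 := by
  rw [mul_apply]
  split_ifs with h
  · rw [Finset.sum_eq_single ⟨j - 1, by omega⟩]
    · have : (j : ℕ) = j - 1 + 1 := by omega
      simp [Jmat, ← this, show (j : ℕ) - 1 ≠ j by omega]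
    · intro k _ hk
      have : (j : ℕ) ≠ k + 1 := fun e => hk (Fin.ext (by simp; omega))
      simp [Jmat, this]
    · simp
  · refine Finset.sum_eq_zero fun k _ => ?_
    have : (j : ℕ) ≠ k + 1 := by omega
    simp [Jmat, this]

lemma isUnit_one_add_smul_Jmat_zero (n : ℕ) (c : ℂ) : IsUnit (1 + c • Jmat n 0) := by
  have : (1 + c • Jmat n 0).IsUpperTriangular := fun i j hji => by
    have hji : (j : ℕ) < i := hji
    simp [Jmat, one_apply, Fin.ext_iff, hji.ne', show (j : ℕ) ≠ i + 1 by omega]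
  rw [isUnit_iff_isUnit_det, det_of_isUpperTriangular this]
  simp [Jmat]

lemma Dmat_eq_submatrix (n : ℕ) :
    Dmat n = (1 + Complex.I • Jmat n 0).submatrix Fin.revPerm (Equiv.refl _) := by
  ext i j
  simp only [Dmat, Jmat, of_apply, submatrix_apply, Matrix.add_apply, Matrix.smul_apply,
    one_apply, Fin.revPerm_apply, Equiv.refl_apply, Fin.ext_iff, Fin.val_rev, smul_eq_mul]
  split_ifs <;> first | omega | simp

lemma map_conj_Dmat_eq_submatrix (n : ℕ) :
    (Dmat n).map (starRingEnd ℂ) =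
      (1 + (-Complex.I) • Jmat n 0).submatrix Fin.revPerm (Equiv.refl _) := by
  ext i j
  simp only [Dmat, Jmat, of_apply, map_apply, submatrix_apply, Matrix.add_apply,
    Matrix.smul_apply, one_apply, Fin.revPerm_apply, Equiv.refl_apply, Fin.ext_iff, Fin.val_rev,
    smul_eq_mul]
  split_ifs <;> first | omega | simp

noncomputable def cayleyJordanCoeff (c : ℂ) (i j : ℕ) : ℂ :=
  (j.choose i : ℂ) * (-c⁻¹) ^ i * (-2⁻¹) ^ j

lemma cayleyJordanCoeff_of_lt (c : ℂ) {i j : ℕ} (h : j < i) : cayleyJordanCoeff c i j = 0 := by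
  simp [cayleyJordanCoeff, Nat.choose_eq_zero_of_lt h]

lemma cayleyJordanCoeff_succ_succ {c : ℂ} (hc : c ≠ 0) (i j : ℕ) :
    2 * c * cayleyJordanCoeff c (i + 1) (j + 1) =
      cayleyJordanCoeff c i j - c * cayleyJordanCoeff c (i + 1) j := by
  simp only [cayleyJordanCoeff, Nat.choose_succ_succ, Nat.cast_add, pow_succ]
  field_simp
  ring

noncomputable def cayleyJordanBasis (c : ℂ) (n : ℕ) : Matrix (Fin n) (Fin n) ℂ :=
  of fun i j => cayleyJordanCoeff c i j

lemma isUnit_cayleyJordanBasis {c : ℂ} (hc : c ≠ 0) (n : ℕ) : IsUnit (cayleyJordanBasis c n) := by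
  have : (cayleyJordanBasis c n).IsUpperTriangular := fun i j hji =>
    cayleyJordanCoeff_of_lt c hji
  rw [isUnit_iff_isUnit_det, det_of_isUpperTriangular this, isUnit_iff_ne_zero,
    Finset.prod_ne_zero_iff]
  intro i _
  simp [cayleyJordanBasis, cayleyJordanCoeff, hc]

lemma one_add_smul_mul_cayleyJordanBasis {c : ℂ} (hc : c ≠ 0) (n : ℕ) :
    (1 + c • Jmat n 0) * cayleyJordanBasis c n =
      (1 + (-c) • Jmat n 0) * cayleyJordanBasis c n * Jmat n 1 := by
  ext i j
  rw [Jmat_eq_smul_one_add n 1, one_smul]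
  simp only [add_mul, mul_add, one_mul, mul_one, smul_mul_assoc, Matrix.add_apply,
    Matrix.smul_apply, Jmat_zero_mul_apply, mul_Jmat_zero_apply, smul_eq_mul]
  obtain ⟨i, hi⟩ := i
  obtain ⟨j, hj⟩ := j
  have hrow : ∀ k < n, (if i + 1 < n then cayleyJordanCoeff c (i + 1) k else 0) =
      cayleyJordanCoeff c (i + 1) k := fun k hk => by
    split_ifs
    · rfl
    · exact (cayleyJordanCoeff_of_lt c (by omega)).symm
  simp only [cayleyJordanBasis, of_apply, dite_eq_ite, hrow j hj]
  cases j with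
  | zero => simp [cayleyJordanCoeff_of_lt c (Nat.succ_pos i)]
  | succ m =>
    simp only [Nat.succ_pos, ite_true, Nat.add_sub_cancel, hrow m (by omega)]
    linear_combination cayleyJordanCoeff_succ_succ hc i m

theorem exists_conj_cayley_Jmat_zero_eq_Jmat_one {c : ℂ} (hc : c ≠ 0) (n : ℕ) :
    ∃ P : Matrix (Fin n) (Fin n) ℂ, IsUnit P ∧
      P⁻¹ * ((1 + (-c) • Jmat n 0)⁻¹ * (1 + c • Jmat n 0)) * P = Jmat n 1 := by
  have hB := (isUnit_iff_isUnit_det _).mp (isUnit_one_add_smul_Jmat_zero n (-c))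
  have hP := isUnit_cayleyJordanBasis hc n
  refine ⟨cayleyJordanBasis c n, hP, ?_⟩
  rw [mul_assoc, mul_assoc, one_add_smul_mul_cayleyJordanBasis hc, mul_assoc,
    nonsing_inv_mul_cancel_left _ _ hB,
    nonsing_inv_mul_cancel_left _ _ ((isUnit_iff_isUnit_det _).mp hP)]

theorem stmt1_general (n : ℕ) :
    IsUnit (Dmat n) ∧
    ∃ P : Matrix (Fin n) (Fin n) ℂ, IsUnit P ∧
      P⁻¹ * (((Dmat n).map (starRingEnd ℂ))⁻¹ * Dmat n) * P = Jmat n 1 := by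
  have hcayley : ((Dmat n).map (starRingEnd ℂ))⁻¹ * Dmat n =
      (1 + (-Complex.I) • Jmat n 0)⁻¹ * (1 + Complex.I • Jmat n 0) := by
    rw [map_conj_Dmat_eq_submatrix, Dmat_eq_submatrix, inv_submatrix_equiv, submatrix_mul_equiv,
      Equiv.coe_refl, submatrix_id_id]
  refine ⟨?_, hcayley ▸ exists_conj_cayley_Jmat_zero_eq_Jmat_one Complex.I_ne_zero n⟩
  rw [Dmat_eq_submatrix, isUnit_submatrix_equiv]
  exact isUnit_one_add_smul_Jmat_zero n Complex.I

/-- For `n ≥ 1`, `Δ_n` is invertible and `(conj Δ_n)⁻¹ Δ_n` is similar to `J_n(1)`. -/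
theorem stmt1 (n : ℕ) (hn : 1 ≤ n) :
    IsUnit (Dmat n) ∧
    ∃ P : Matrix (Fin n) (Fin n) ℂ, IsUnit P ∧
      P⁻¹ * (((Dmat n).map (starRingEnd ℂ))⁻¹ * Dmat n) * P = Jmat n 1 :=
  stmt1_general n
end

section
/- Let A₁ ∈ ℂ^{m×m}, A₂ ∈ ℂ^{n×n}, and let A = A₁ ⊕ A₂ ∈ ℂ^{(m+n)×(m+n)} be their block-diagonal direct sum. Let V₁₁ ⊆ ℂ^{m×m}, V₂₂ ⊆ ℂ^{n×n}, V₂₁ ⊆ ℂ^{n×m}, V₁₂ ⊆ ℂ^{m×n} be real subspaces, and let V ⊆ ℂ^{(m+n)×(m+n)} be the real subspace of all block matrices [[D₁₁, D₁₂],[D₂₁, D₂₂]] with D_{ij} ∈ V_{ij}. Then ℂ^{(m+n)×(m+n)} = T(A) ⊕_ℝ V (direct sum of real vector spaces) if and only if all three of the following hold: ℂ^{m×m} = T(A₁) ⊕_ℝ V₁₁, ℂ^{n×n} = T(A₂) ⊕_ℝ V₂₂, and ℂ^{n×m} × ℂ^{m×n} = T(A₁,A₂) ⊕_ℝ (V₂₁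 × V₁₂). -/
open Matrix

lemma tb11_sub {m n : ℕ} (X D : Matrix (Fin m ⊕ Fin n) (Fin m ⊕ Fin n) ℂ) :
    (X - D).toBlocks₁₁ = X.toBlocks₁₁ - D.toBlocks₁₁ := rfl
lemma tb12_sub {m n : ℕ} (X D : Matrix (Fin m ⊕ Fin n) (Fin m ⊕ Fin n) ℂ) :
    (X - D).toBlocks₁₂ = X.toBlocks₁₂ - D.toBlocks₁₂ := rfl
lemma tb21_sub {m n : ℕ} (X D : Matrix (Fin m ⊕ Fin n) (Fin m ⊕ Fin n) ℂ) :
    (X - D).toBlocks₂₁ = X.toBlocks₂₁ - D.toBlocks₂₁ := rfl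
lemma tb22_sub {m n : ℕ} (X D : Matrix (Fin m ⊕ Fin n) (Fin m ⊕ Fin n) ℂ) :
    (X - D).toBlocks₂₂ = X.toBlocks₂₂ - D.toBlocks₂₂ := rfl

lemma Tset_block_iff {m n : ℕ} (A₁ : Matrix (Fin m) (Fin m) ℂ) (A₂ : Matrix (Fin n) (Fin n) ℂ)
    (X : Matrix (Fin m ⊕ Fin n) (Fin m ⊕ Fin n) ℂ) :
    X ∈ Tset (Matrix.fromBlocks A₁ 0 0 A₂) ↔
      X.toBlocks₁₁ ∈ Tset A₁ ∧ X.toBlocks₂₂ ∈ Tset A₂ ∧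
        (X.toBlocks₂₁, X.toBlocks₁₂) ∈ Tpair A₁ A₂ := by
  constructor
  · rintro ⟨C, rfl⟩
    rw [← Matrix.fromBlocks_toBlocks C]
    simp only [Matrix.fromBlocks_conjTranspose, Matrix.fromBlocks_multiply,
      Matrix.fromBlocks_add, Matrix.toBlocks_fromBlocks₁₁, Matrix.toBlocks_fromBlocks₁₂,
      Matrix.toBlocks_fromBlocks₂₁, Matrix.toBlocks_fromBlocks₂₂,
      Matrix.mul_zero, Matrix.zero_mul, add_zero, zero_add]
    exact ⟨⟨C.toBlocks₁₁, rfl⟩, ⟨C.toBlocks₂₂, rfl⟩, ⟨C.toBlocks₁₂, C.toBlocks₂₁, rfl⟩⟩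
  · rintro ⟨⟨C₁₁, h11⟩, ⟨C₂₂, h22⟩, S, R, hp⟩
    refine ⟨Matrix.fromBlocks C₁₁ S R C₂₂, ?_⟩
    rw [← Matrix.fromBlocks_toBlocks X]
    simp only [Prod.mk.injEq] at hp
    rw [h11, h22, hp.1, hp.2]
    simp only [Matrix.fromBlocks_conjTranspose, Matrix.fromBlocks_multiply,
      Matrix.fromBlocks_add, Matrix.mul_zero, Matrix.zero_mul, add_zero, zero_add]

/-- `ℂ^{(m+n)×(m+n)} = T(A₁ ⊕ A₂) ⊕_ℝ V` (with `V` built from the blockwise real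
subspaces `V₁₁, V₁₂, V₂₁, V₂₂`) if and only if
`ℂ^{m×m} = T(A₁) ⊕_ℝ V₁₁`, `ℂ^{n×n} = T(A₂) ⊕_ℝ V₂₂`, and
`ℂ^{n×m} × ℂ^{m×n} = T(A₁,A₂) ⊕_ℝ (V₂₁ × V₁₂)`; direct sums of real vector
spaces are expressed by unique decomposition of every element. -/
theorem stmt2 (m n : ℕ)
    (A₁ : Matrix (Fin m) (Fin m) ℂ) (A₂ : Matrix (Fin n) (Fin n) ℂ)
    (V₁₁ : Submodule ℝ (Matrix (Fin m) (Fin m) ℂ))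
    (V₂₂ : Submodule ℝ (Matrix (Fin n) (Fin n) ℂ))
    (V₂₁ : Submodule ℝ (Matrix (Fin n) (Fin m) ℂ))
    (V₁₂ : Submodule ℝ (Matrix (Fin m) (Fin n) ℂ)) :
    (∀ X : Matrix (Fin m ⊕ Fin n) (Fin m ⊕ Fin n) ℂ,
        ∃! D : Matrix (Fin m ⊕ Fin n) (Fin m ⊕ Fin n) ℂ,
          (D.toBlocks₁₁ ∈ V₁₁ ∧ D.toBlocks₁₂ ∈ V₁₂ ∧
           D.toBlocks₂₁ ∈ V₂₁ ∧ D.toBlocks₂₂ ∈ V₂₂) ∧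
          X - D ∈ Tset (Matrix.fromBlocks A₁ 0 0 A₂))
    ↔ ((∀ X : Matrix (Fin m) (Fin m) ℂ,
          ∃! D : Matrix (Fin m) (Fin m) ℂ, D ∈ V₁₁ ∧ X - D ∈ Tset A₁) ∧
       (∀ X : Matrix (Fin n) (Fin n) ℂ,
          ∃! D : Matrix (Fin n) (Fin n) ℂ, D ∈ V₂₂ ∧ X - D ∈ Tset A₂) ∧
       (∀ X : Matrix (Fin n) (Fin m) ℂ × Matrix (Fin m) (Fin n) ℂ,
          ∃! D : Matrix (Fin n) (Fin m) ℂ × Matrix (Fin m) (Fin n) ℂ,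
            (D.1 ∈ V₂₁ ∧ D.2 ∈ V₁₂) ∧ X - D ∈ Tpair A₁ A₂)) := by
  constructor
  · intro H
    refine ⟨?_, ?_, ?_⟩
    · intro X₁₁
      obtain ⟨D, ⟨⟨h11, h12, h21, h22⟩, hT⟩, huniq⟩ := H (Matrix.fromBlocks X₁₁ 0 0 0)
      rw [Tset_block_iff] at hT
      simp only [tb11_sub, tb12_sub, tb21_sub, tb22_sub, Matrix.toBlocks_fromBlocks₁₁,
        Matrix.toBlocks_fromBlocks₁₂, Matrix.toBlocks_fromBlocks₂₁,
        Matrix.toBlocks_fromBlocks₂₂] at hT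
      refine ⟨D.toBlocks₁₁, ⟨h11, hT.1⟩, ?_⟩
      intro y ⟨hy1, hy2⟩
      have hD' : Matrix.fromBlocks y D.toBlocks₁₂ D.toBlocks₂₁ D.toBlocks₂₂ = D := by
        apply huniq
        refine ⟨⟨?_, ?_, ?_, ?_⟩, ?_⟩
        · exact hy1
        · exact h12
        · exact h21
        · exact h22
        · rw [Tset_block_iff]
          simp only [tb11_sub, tb12_sub, tb21_sub, tb22_sub, Matrix.toBlocks_fromBlocks₁₁,
            Matrix.toBlocks_fromBlocks₁₂, Matrix.toBlocks_fromBlocks₂₁,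
            Matrix.toBlocks_fromBlocks₂₂]
          exact ⟨hy2, hT.2.1, hT.2.2⟩
      calc y = (Matrix.fromBlocks y D.toBlocks₁₂ D.toBlocks₂₁ D.toBlocks₂₂).toBlocks₁₁ := rfl
        _ = D.toBlocks₁₁ := by rw [hD']
    · intro X₂₂
      obtain ⟨D, ⟨⟨h11, h12, h21, h22⟩, hT⟩, huniq⟩ := H (Matrix.fromBlocks 0 0 0 X₂₂)
      rw [Tset_block_iff] at hT
      simp only [tb11_sub, tb12_sub, tb21_sub, tb22_sub, Matrix.toBlocks_fromBlocks₁₁,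
        Matrix.toBlocks_fromBlocks₁₂, Matrix.toBlocks_fromBlocks₂₁,
        Matrix.toBlocks_fromBlocks₂₂] at hT
      refine ⟨D.toBlocks₂₂, ⟨h22, hT.2.1⟩, ?_⟩
      intro y ⟨hy1, hy2⟩
      have hD' : Matrix.fromBlocks D.toBlocks₁₁ D.toBlocks₁₂ D.toBlocks₂₁ y = D := by
        apply huniq
        refine ⟨⟨?_, ?_, ?_, ?_⟩, ?_⟩
        · exact h11
        · exact h12
        · exact h21
        · exact hy1
        · rw [Tset_block_iff]
          simp only [tb11_sub, tb12_sub, tb21_sub, tb22_sub, Matrix.toBlocks_fromBlocks₁₁,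
            Matrix.toBlocks_fromBlocks₁₂, Matrix.toBlocks_fromBlocks₂₁,
            Matrix.toBlocks_fromBlocks₂₂]
          exact ⟨hT.1, hy2, hT.2.2⟩
      calc y = (Matrix.fromBlocks D.toBlocks₁₁ D.toBlocks₁₂ D.toBlocks₂₁ y).toBlocks₂₂ := rfl
        _ = D.toBlocks₂₂ := by rw [hD']
    · intro P
      obtain ⟨D, ⟨⟨h11, h12, h21, h22⟩, hT⟩, huniq⟩ := H (Matrix.fromBlocks 0 P.2 P.1 0)
      rw [Tset_block_iff] at hT
      simp only [tb11_sub, tb12_sub, tb21_sub, tb22_sub, Matrix.toBlocks_fromBlocks₁₁,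
        Matrix.toBlocks_fromBlocks₁₂, Matrix.toBlocks_fromBlocks₂₁,
        Matrix.toBlocks_fromBlocks₂₂] at hT
      refine ⟨(D.toBlocks₂₁, D.toBlocks₁₂), ⟨⟨h21, h12⟩, hT.2.2⟩, ?_⟩
      intro y ⟨⟨hy1, hy2⟩, hyT⟩
      have hD' : Matrix.fromBlocks D.toBlocks₁₁ y.2 y.1 D.toBlocks₂₂ = D := by
        apply huniq
        refine ⟨⟨?_, ?_, ?_, ?_⟩, ?_⟩
        · exact h11
        · exact hy2
        · exact hy1
        · exact h22
        · rw [Tset_block_iff]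
          simp only [tb11_sub, tb12_sub, tb21_sub, tb22_sub, Matrix.toBlocks_fromBlocks₁₁,
            Matrix.toBlocks_fromBlocks₁₂, Matrix.toBlocks_fromBlocks₂₁,
            Matrix.toBlocks_fromBlocks₂₂]
          exact ⟨hT.1, hT.2.1, hyT⟩
      have h1 : y.1 = D.toBlocks₂₁ := by
        calc y.1 = (Matrix.fromBlocks D.toBlocks₁₁ y.2 y.1 D.toBlocks₂₂).toBlocks₂₁ := rfl
          _ = D.toBlocks₂₁ := by rw [hD']
      have h2 : y.2 = D.toBlocks₁₂ := by
        calc y.2 = (Matrix.fromBlocks D.toBlocks₁₁ y.2 y.1 D.toBlocks₂₂).toBlocks₁₂ := rfl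
          _ = D.toBlocks₁₂ := by rw [hD']
      exact Prod.ext h1 h2
  · rintro ⟨H1, H2, H3⟩ X
    obtain ⟨D11, ⟨hm11, ht11⟩, hu11⟩ := H1 X.toBlocks₁₁
    obtain ⟨D22, ⟨hm22, ht22⟩, hu22⟩ := H2 X.toBlocks₂₂
    obtain ⟨P, ⟨⟨hm21, hm12⟩, htp⟩, hup⟩ := H3 (X.toBlocks₂₁, X.toBlocks₁₂)
    refine ⟨Matrix.fromBlocks D11 P.2 P.1 D22, ⟨⟨?_, ?_, ?_, ?_⟩, ?_⟩, ?_⟩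
    · exact hm11
    · exact hm12
    · exact hm21
    · exact hm22
    · rw [Tset_block_iff]
      simp only [tb11_sub, tb12_sub, tb21_sub, tb22_sub, Matrix.toBlocks_fromBlocks₁₁,
        Matrix.toBlocks_fromBlocks₁₂, Matrix.toBlocks_fromBlocks₂₁,
        Matrix.toBlocks_fromBlocks₂₂]
      exact ⟨ht11, ht22, htp⟩
    · intro D' ⟨⟨h11, h12, h21, h22⟩, hT⟩
      rw [Tset_block_iff] at hT
      simp only [tb11_sub, tb12_sub, tb21_sub, tb22_sub] at hT
      have e11 : D'.toBlocks₁₁ = D11 := hu11 _ ⟨h11, hT.1⟩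
      have e22 : D'.toBlocks₂₂ = D22 := hu22 _ ⟨h22, hT.2.1⟩
      have ep : (D'.toBlocks₂₁, D'.toBlocks₁₂) = P := hup _ ⟨⟨h21, h12⟩, hT.2.2⟩
      have e21 : D'.toBlocks₂₁ = P.1 := congrArg Prod.fst ep
      have e12 : D'.toBlocks₁₂ = P.2 := congrArg Prod.snd ep
      rw [← Matrix.fromBlocks_toBlocks D', e11, e22, e21, e12]
end

section
/- Let λ ∈ ℂ with |λ| ≠ 1. Then for every matrix B ∈ ℂ^{n×n} there exists R ∈ ℂ^{n×n} such that B + J_n(λ)·R + R* = 0; in other words, the real-linear map R ↦ J_n(λ)·R + R* from ℂ^{n×n} to ℂ^{n×n} is surjective. -/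
/-!
If `J R + Rᴴ = 0` then `R = J R Jᴴ`. Writing `J = λ + N` with `N` nilpotent, this reads
`(1 - |λ|²) R = λ̄ N R + λ R Nᴴ + N R Nᴴ`, and the right-hand side is `R` under a sum of
commuting nilpotent operators (left and right multiplications). So `1 - |λ|²` would be a
nilpotent eigenvalue, which is impossible since `|λ| ≠ 1`; hence `R = 0`. The real-linear map
`R ↦ J R + Rᴴ` on the finite-dimensional space of matrices is thus injective, hence surjective.
-/

open Matrix

theorem eq_zero_of_eq_mul_mul_of_isNilpotent {K A : Type*} [Field K] [Ring A] [Algebra K A]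
    {N M x : A} (hN : IsNilpotent N) (hM : IsNilpotent M) {a b : K} (hab : a * b ≠ 1)
    (hx : x = (algebraMap K A a + N) * x * (algebraMap K A b + M)) : x = 0 := by
  -- `(1 - a b) x = b N x + a x M + N x M`, the image of `x` under a nilpotent operator.
  set L : Module.End K A :=
    b • LinearMap.mulLeft K N + a • LinearMap.mulRight K M +
      LinearMap.mulLeft K N * LinearMap.mulRight K M
  have hL : IsNilpotent L := by
    have hc := LinearMap.commute_mulLeft_right (R := K) N M
    have hlN := (LinearMap.isNilpotent_mulLeft_iff K N).2 hN
    have hrM := (LinearMap.isNilpotent_mulRight_iff K M).2 hM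
    refine Commute.isNilpotent_add ?_ (Commute.isNilpotent_add ?_ (hlN.smul b) (hrM.smul a)) ?_
    · exact (((Commute.refl _).mul_right hc).smul_left b).add_left
        ((hc.symm.mul_right (Commute.refl _)).smul_left a)
    · exact (hc.smul_left b).smul_right a
    · exact hc.isNilpotent_mul_right hlN
  have hLx : L x = (1 - a * b) • x := by
    simp only [Algebra.algebraMap_eq_smul_one, add_mul, mul_add, smul_mul_assoc, mul_smul_comm,
      one_mul, mul_one, mul_assoc] at hx
    simp only [L, LinearMap.add_apply, LinearMap.smul_apply, Module.End.mul_apply,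
      LinearMap.mulLeft_apply, LinearMap.mulRight_apply]
    linear_combination (norm := module) -hx
  by_contra hx0
  have hev : L.HasEigenvector (1 - a * b) x :=
    Module.End.hasEigenvector_iff.2 ⟨Module.End.mem_eigenspace_iff.2 hLx, hx0⟩
  have := (Module.End.hasEigenvalue_of_hasEigenvector hev).isNilpotent_of_isNilpotent hL
  exact hab (sub_eq_zero.1 this.eq_zero).symm

theorem isNilpotent_Jmat_zero (n : ℕ) : IsNilpotent (Jmat n 0) := by
  have h : (Jmat n 0).charpoly = Polynomial.X ^ n := by
    rw [Matrix.charpoly_of_isUpperTriangular]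
    · simp [Jmat]
    · intro i j hij
      have : (j : ℕ) < i := hij
      simp only [Jmat, Matrix.of_apply]
      split_ifs <;> first | rfl | omega
  exact ⟨n, by simpa [h] using Matrix.aeval_self_charpoly (Jmat n 0)⟩

theorem Jmat_eq_algebraMap_add (n : ℕ) (l : ℂ) :
    Jmat n l = algebraMap ℂ _ l + Jmat n 0 := by
  ext i j
  simp only [Jmat, Matrix.algebraMap_matrix_apply, Matrix.add_apply, Matrix.of_apply, Fin.ext_iff]
  split_ifs <;> simp_all

theorem conjTranspose_Jmat (n : ℕ) (l : ℂ) :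
    (Jmat n l)ᴴ = algebraMap ℂ _ (star l) + (Jmat n 0)ᴴ := by
  rw [Jmat_eq_algebraMap_add, conjTranspose_add, algebraMap_eq_diagonal, diagonal_conjTranspose]
  rfl

theorem IsNilpotent.conjTranspose {α m : Type*} [Semiring α] [StarRing α] [Fintype m]
    [DecidableEq m] {N : Matrix m m α} (hN : IsNilpotent N) : IsNilpotent Nᴴ := by
  obtain ⟨k, hk⟩ := hN
  exact ⟨k, by rw [← conjTranspose_pow, hk, conjTranspose_zero]⟩

theorem eq_mul_mul_conjTranspose_of_mul_add_conjTranspose_eq_zero {α m : Type*} [Ring α]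
    [StarRing α] [Fintype m] {A R : Matrix m m α} (h : A * R + Rᴴ = 0) : R = A * R * Aᴴ := by
  have hR : Rᴴ = -(A * R) := eq_neg_of_add_eq_zero_right h
  calc R = (Rᴴ)ᴴ := (conjTranspose_conjTranspose R).symm
    _ = A * R * Aᴴ := by
      rw [hR, conjTranspose_neg, conjTranspose_mul, hR, Matrix.neg_mul, neg_neg,
        Matrix.mul_assoc]

theorem mul_star_ne_one_of_norm_ne_one {l : ℂ} (hl : ‖l‖ ≠ 1) : l * star l ≠ 1 := by
  rw [Complex.star_def, Complex.mul_conj, Complex.normSq_eq_norm_sq]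
  exact_mod_cast mt (pow_eq_one_iff_of_nonneg (norm_nonneg l) two_ne_zero).1 hl

theorem eq_zero_of_Jmat_mul_add_conjTranspose_eq_zero {n : ℕ} {l : ℂ} (hl : ‖l‖ ≠ 1)
    {R : Matrix (Fin n) (Fin n) ℂ} (h : Jmat n l * R + Rᴴ = 0) : R = 0 := by
  have hR := eq_mul_mul_conjTranspose_of_mul_add_conjTranspose_eq_zero h
  rw [conjTranspose_Jmat, Jmat_eq_algebraMap_add] at hR
  exact eq_zero_of_eq_mul_mul_of_isNilpotent (isNilpotent_Jmat_zero n)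
    (isNilpotent_Jmat_zero n).conjTranspose (mul_star_ne_one_of_norm_ne_one hl) hR

def Matrix.mulLeftAddConjTranspose {m : Type*} [Fintype m] (A : Matrix m m ℂ) :
    Matrix m m ℂ →ₗ[ℝ] Matrix m m ℂ where
  toFun R := A * R + Rᴴ
  map_add' R S := by
    rw [Matrix.mul_add, conjTranspose_add]
    abel
  map_smul' c R := by
    simp [conjTranspose_smul]

theorem Matrix.mulLeftAddConjTranspose_surjective {m : Type*} [Fintype m] {A : Matrix m m ℂ}
    (hA : ∀ R : Matrix m m ℂ, A * R + Rᴴ = 0 → R = 0) :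
    Function.Surjective A.mulLeftAddConjTranspose :=
  LinearMap.injective_iff_surjective.1 <|
    (injective_iff_map_eq_zero _).2 hA

/-- For `|λ| ≠ 1`, the map `R ↦ J_n(λ)·R + Rᴴ` is surjective: every `B` can be
reduced to `0` by adding `J_n(λ)·R + Rᴴ`. -/
theorem stmt4 (n : ℕ) (l : ℂ) (hl : ‖l‖ ≠ 1)
    (B : Matrix (Fin n) (Fin n) ℂ) :
    ∃ R : Matrix (Fin n) (Fin n) ℂ, B + Jmat n l * R + Rᴴ = 0 := by
  obtain ⟨R, hR⟩ := mulLeftAddConjTranspose_surjective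
    (fun _ => eq_zero_of_Jmat_mul_add_conjTranspose_eq_zero hl) (-B)
  refine ⟨R, ?_⟩
  rw [add_assoc, show Jmat n l * R + Rᴴ = -B from hR, add_neg_cancel]
end

section
/- For every λ ∈ ℂ and every A ∈ ℂ^{n×n} there exists exactly one matrix D ∈ ℂ^{n×n} whose entries are zero outside the first column (D_{jk} = 0 whenever k ≠ 1) such that A − D = S·J_n(λ) − J_n(λ)·S for some S ∈ ℂ^{n×n}; that is, ℂ^{n×n} is the direct sum of the range of the commutator map S ↦ S·J_n(λ) − J_n(λ)·S and the subspace of matrices supported in the first column. -/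
open Matrix

noncomputable def extM (n : ℕ) (S : Matrix (Fin n) (Fin n) ℂ) (i m : ℕ) : ℂ :=
  if h : i < n ∧ m < n then S ⟨i, h.1⟩ ⟨m, h.2⟩ else 0

lemma mulJ_entry (n : ℕ) (l : ℂ) (S : Matrix (Fin n) (Fin n) ℂ) (j k : Fin n) :
    (S * Jmat n l) j k
      = l * S j k + (if (k : ℕ) = 0 then 0 else extM n S (j : ℕ) ((k : ℕ) - 1)) := by
  rw [Matrix.mul_apply]
  have key : ∀ m : Fin n, S j m * Jmat n l m k
      = (if m = k then l * S j k else 0) + (if (k:ℕ) = (m:ℕ) + 1 then S j m else 0) := by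
    intro m
    simp only [Jmat, Matrix.of_apply]
    by_cases h1 : (m:ℕ) = (k:ℕ)
    · have hmk : m = k := Fin.ext h1
      subst hmk
      simp [h1, mul_comm]
    · have hmk : ¬ m = k := fun e => h1 (by rw [e])
      by_cases h2 : (k:ℕ) = (m:ℕ) + 1 <;> simp [h1, h2, hmk]
  rw [Finset.sum_congr rfl (fun m _ => key m), Finset.sum_add_distrib]
  congr 1
  · simp
  · by_cases hk : (k:ℕ) = 0
    · rw [if_pos hk]
      apply Finset.sum_eq_zero
      intro m _
      rw [if_neg]; omega
    · rw [if_neg hk]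
      have hk1 : (k:ℕ) - 1 < n := by omega
      rw [extM, dif_pos ⟨j.isLt, hk1⟩]
      rw [Finset.sum_eq_single (⟨(k:ℕ)-1, hk1⟩ : Fin n)]
      · rw [if_pos (by simp; omega)]
      · intro m _ hm; rw [if_neg]; intro hc; apply hm; apply Fin.ext; simp; omega
      · intro h; exact absurd (Finset.mem_univ _) h

lemma Jmul_entry (n : ℕ) (l : ℂ) (S : Matrix (Fin n) (Fin n) ℂ) (j k : Fin n) :
    (Jmat n l * S) j k = l * S j k + extM n S ((j : ℕ) + 1) (k : ℕ) := by
  rw [Matrix.mul_apply]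
  have key : ∀ m : Fin n, Jmat n l j m * S m k
      = (if m = j then l * S j k else 0) + (if (m:ℕ) = (j:ℕ) + 1 then S m k else 0) := by
    intro m
    simp only [Jmat, Matrix.of_apply]
    by_cases h1 : (j:ℕ) = (m:ℕ)
    · have hmk : m = j := Fin.ext h1.symm
      subst hmk
      simp [h1, mul_comm]
    · have hmk : ¬ m = j := fun e => h1 (by rw [e])
      by_cases h2 : (m:ℕ) = (j:ℕ) + 1 <;> simp [h1, h2, hmk]
  rw [Finset.sum_congr rfl (fun m _ => key m), Finset.sum_add_distrib]
  congr 1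
  · simp
  · by_cases hj : (j:ℕ) + 1 < n
    · rw [extM, dif_pos ⟨hj, k.isLt⟩]
      rw [Finset.sum_eq_single (⟨(j:ℕ)+1, hj⟩ : Fin n)]
      · rw [if_pos (by simp)]
      · intro m _ hm; rw [if_neg]; intro hc; apply hm; exact Fin.ext hc
      · intro h; exact absurd (Finset.mem_univ _) h
    · rw [extM, dif_neg (by omega)]
      apply Finset.sum_eq_zero
      intro m _
      rw [if_neg]; omega

lemma comm_entry (n : ℕ) (l : ℂ) (S : Matrix (Fin n) (Fin n) ℂ) (j k : Fin n) :
    (S * Jmat n l - Jmat n l * S) j k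
      = (if (k : ℕ) = 0 then 0 else extM n S (j : ℕ) ((k : ℕ) - 1))
        - extM n S ((j : ℕ) + 1) (k : ℕ) := by
  rw [Matrix.sub_apply, mulJ_entry, Jmul_entry]; ring

/-- Fueled recursion for the solution matrix. -/
noncomputable def gfun (n : ℕ) (A : Matrix (Fin n) (Fin n) ℂ) : ℕ → ℕ → ℕ → ℂ
  | 0, _, _ => 0
  | c+1, i, m => extM n A i (m+1) + gfun n A c (i+1) (m+1)

noncomputable def Sfun (n : ℕ) (A : Matrix (Fin n) (Fin n) ℂ) (i m : ℕ) : ℂ :=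
  gfun n A (n - i) i m

lemma Sfun_of_ge (n : ℕ) (A : Matrix (Fin n) (Fin n) ℂ) (i m : ℕ) (hi : n ≤ i) :
    Sfun n A i m = 0 := by
  unfold Sfun
  have : n - i = 0 := by omega
  rw [this]; rfl

lemma Sfun_rec (n : ℕ) (A : Matrix (Fin n) (Fin n) ℂ) (i m : ℕ) (hi : i < n) :
    Sfun n A i m = extM n A i (m+1) + Sfun n A (i+1) (m+1) := by
  unfold Sfun
  have : n - i = (n - (i+1)) + 1 := by omega
  rw [this]; rfl

noncomputable def Smat (n : ℕ) (A : Matrix (Fin n) (Fin n) ℂ) : Matrix (Fin n) (Fin n) ℂ :=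
  Matrix.of fun i m => Sfun n A (i : ℕ) (m : ℕ)

lemma extM_Smat (n : ℕ) (A : Matrix (Fin n) (Fin n) ℂ) (i m : ℕ) (hm : m < n) :
    extM n (Smat n A) i m = Sfun n A i m := by
  by_cases hi : i < n
  · rw [extM, dif_pos ⟨hi, hm⟩]; rfl
  · rw [extM, dif_neg (by omega), Sfun_of_ge n A i m (by omega)]

/-- The commutator with `Jmat` reproduces `A` outside the first column. -/
lemma comm_Smat (n : ℕ) (l : ℂ) (A : Matrix (Fin n) (Fin n) ℂ) (j k : Fin n)
    (hk : (k : ℕ) ≠ 0) :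
    (Smat n A * Jmat n l - Jmat n l * Smat n A) j k = A j k := by
  rw [comm_entry, if_neg hk]
  rw [extM_Smat n A _ _ (by omega), extM_Smat n A _ _ k.isLt]
  rw [Sfun_rec n A (j : ℕ) ((k:ℕ)-1) j.isLt]
  have h1 : (k:ℕ) - 1 + 1 = (k:ℕ) := by omega
  rw [h1, extM, dif_pos ⟨j.isLt, k.isLt⟩]
  simp

/-- A commutator supported in the first column vanishes. -/
lemma comm_col_zero (n : ℕ) (l : ℂ) (T : Matrix (Fin n) (Fin n) ℂ)
    (h : ∀ j k : Fin n, (k : ℕ) ≠ 0 → (T * Jmat n l - Jmat n l * T) j k = 0) :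
    T * Jmat n l - Jmat n l * T = 0 := by
  have key : ∀ d (i m : ℕ) (hi : i < n) (hm : m < n), m < i → n - i ≤ d →
      T ⟨i, hi⟩ ⟨m, hm⟩ = 0 := by
    intro d
    induction d with
    | zero => intro i m hi hm _ hd; omega
    | succ d ih =>
      intro i m hi hm hmi hd
      have hm1 : m + 1 < n := by omega
      have h0 := h ⟨i, hi⟩ ⟨m+1, hm1⟩ (by simp)
      rw [comm_entry] at h0
      simp only [if_neg (Nat.succ_ne_zero m)] at h0
      have hsimp : m + 1 - 1 = m := by omega
      rw [hsimp] at h0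
      rw [extM, dif_pos ⟨hi, hm⟩] at h0
      have hT : T ⟨i, hi⟩ ⟨m, hm⟩ = extM n T (i+1) (m+1) := by
        have := sub_eq_zero.mp h0
        simpa using this
      rw [hT]
      by_cases hi1 : i + 1 < n
      · rw [extM, dif_pos ⟨hi1, hm1⟩]
        exact ih (i+1) (m+1) hi1 hm1 (by omega) (by omega)
      · rw [extM, dif_neg (by omega)]
  ext j k
  by_cases hk : (k : ℕ) = 0
  · rw [comm_entry, if_pos hk, Matrix.zero_apply]
    have : extM n T ((j:ℕ)+1) (k:ℕ) = 0 := by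
      by_cases hj : (j:ℕ) + 1 < n
      · rw [extM, dif_pos ⟨hj, k.isLt⟩]
        exact key n ((j:ℕ)+1) (k:ℕ) hj k.isLt (by omega) (by omega)
      · rw [extM, dif_neg (by omega)]
    rw [this]; ring
  · rw [h j k hk, Matrix.zero_apply]

/-- `ℂ^{n×n}` is the direct sum of the range of `S ↦ S·J_n(λ) − J_n(λ)·S` and the
subspace of matrices supported in the first column: every `A` has a unique such
decomposition. -/
theorem stmt5 (n : ℕ) (l : ℂ) (A : Matrix (Fin n) (Fin n) ℂ) :
    ∃! D : Matrix (Fin n) (Fin n) ℂ,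
      (∀ j k : Fin n, (k : ℕ) ≠ 0 → D j k = 0) ∧
      ∃ S : Matrix (Fin n) (Fin n) ℂ, A - D = S * Jmat n l - Jmat n l * S := by
  set C := Smat n A * Jmat n l - Jmat n l * Smat n A with hC
  set D : Matrix (Fin n) (Fin n) ℂ :=
    Matrix.of (fun j k => if (k : ℕ) = 0 then A j k - C j k else 0) with hD
  have hDcol : ∀ j k : Fin n, (k : ℕ) ≠ 0 → D j k = 0 := by
    intro j k hk; simp [hD, hk]
  have hAD : A - D = C := by
    ext j k
    by_cases hk : (k : ℕ) = 0
    · simp [hD, hk, Matrix.sub_apply]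
    · simp only [hD, Matrix.sub_apply, Matrix.of_apply, if_neg hk, sub_zero]
      exact (comm_Smat n l A j k hk).symm
  refine ⟨D, ⟨hDcol, Smat n A, hAD⟩, ?_⟩
  rintro D' ⟨hD'col, S', hS'⟩
  have hTcomm : (S' - Smat n A) * Jmat n l - Jmat n l * (S' - Smat n A) = D - D' := by
    have : (S' - Smat n A) * Jmat n l - Jmat n l * (S' - Smat n A)
        = (S' * Jmat n l - Jmat n l * S') - (Smat n A * Jmat n l - Jmat n l * Smat n A) := by
      rw [sub_mul, mul_sub]; abel
    rw [this, ← hS', ← hC, ← hAD]; abel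
  have hzero : (S' - Smat n A) * Jmat n l - Jmat n l * (S' - Smat n A) = 0 := by
    apply comm_col_zero
    intro j k hk
    rw [hTcomm, Matrix.sub_apply, hDcol j k hk, hD'col j k hk, sub_zero]
  rw [hzero] at hTcomm
  have : D = D' := by
    have := hTcomm.symm
    rwa [sub_eq_zero] at this
  exact this.symm
end

section
/- Let μ ∈ ℂ with |μ| = 1. Then for every A ∈ ℂ^{n×n} there exists S ∈ ℂ^{n×n} such that A + μ(S*Δ_n + Δ_n S) is a diagonal matrix. -/
open Matrix

/-!
Dividing by `μ`, it suffices that the real subspace `{SᴴΔ + ΔS} + {diagonal matrices}` is all of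
`ℂ^{n×n}`, i.e. that its orthogonal complement for the nondegenerate real pairing
`⟨X, Y⟩ = Re tr (X Y)` is zero. A matrix `Y` in that complement has zero diagonal and satisfies
`YΔ + YᴴΔᴴ = 0`. As `Δ` is supported on two adjacent antidiagonals, this relation says that the
skew-Hermitian part `v` and the Hermitian part `w` of `Y` satisfy `v (a, m+1) = i w (a, m)`, so
`v` is constant along antidiagonals. It vanishes on the diagonal and, because `w` does, on the
superdiagonal; hence `v = 0`, and then `w = 0`.
-/

open Complex ComplexConjugate
open scoped ComplexOrder

namespace Matrix

/-- Reading entries outside `Fin n` as `0` puts the relation coming from the first column of `Δ`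
in the same form as all the others. -/
def extendByZero {α : Type*} [Zero α] {n : ℕ} (M : Matrix (Fin n) (Fin n) α) (i j : ℕ) : α :=
  if h : i < n ∧ j < n then M ⟨i, h.1⟩ ⟨j, h.2⟩ else 0

section extendByZero

variable {α : Type*} [Zero α] {n : ℕ} (M : Matrix (Fin n) (Fin n) α)

@[simp] lemma extendByZero_val (i j : Fin n) : M.extendByZero i j = M i j := by
  simp [extendByZero]

lemma extendByZero_of_le_left {i : ℕ} (hi : n ≤ i) (j : ℕ) : M.extendByZero i j = 0 := by
  simp [extendByZero, hi.not_gt]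

lemma extendByZero_of_le_right (i : ℕ) {j : ℕ} (hj : n ≤ j) : M.extendByZero i j = 0 := by
  simp [extendByZero, hj.not_gt]

lemma extendByZero_transpose (i j : ℕ) : Mᵀ.extendByZero i j = M.extendByZero j i := by
  simp only [extendByZero, transpose_apply, and_comm]

end extendByZero

section reTraceForm

variable {ι : Type*} [Fintype ι]

variable (ι) in
noncomputable def reTraceForm : LinearMap.BilinForm ℝ (Matrix ι ι ℂ) :=
  (LinearMap.mul ℝ (Matrix ι ι ℂ)).compr₂ (reLm ∘ₗ traceLinearMap ι ℝ ℂ)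

@[simp] lemma reTraceForm_apply (X Y : Matrix ι ι ℂ) : reTraceForm ι X Y = (X * Y).trace.re :=
  rfl

lemma reTraceForm_isSymm : (reTraceForm ι).IsSymm :=
  ⟨fun X Y => by simp only [reTraceForm_apply, trace_mul_comm X]⟩

lemma eq_zero_of_forall_re_trace_mul_eq_zero {Y : Matrix ι ι ℂ}
    (h : ∀ X, (X * Y).trace.re = 0) : Y = 0 := by
  have hnonneg : 0 ≤ (Yᴴ * Y).trace := (posSemidef_conjTranspose_mul_self Y).trace_nonneg
  rw [← trace_conjTranspose_mul_self_eq_zero_iff]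
  exact Complex.ext (h Yᴴ) (Complex.nonneg_iff.mp hnonneg).2.symm

lemma reTraceForm_nondegenerate : (reTraceForm ι).Nondegenerate :=
  ⟨fun Y hY => eq_zero_of_forall_re_trace_mul_eq_zero fun X => by
      rw [trace_mul_comm]; exact hY X,
    fun Y hY => eq_zero_of_forall_re_trace_mul_eq_zero hY⟩

lemma diag_eq_zero_of_forall_re_trace_diagonal_mul_eq_zero [DecidableEq ι] {Y : Matrix ι ι ℂ}
    (h : ∀ d, (diagonal d * Y).trace.re = 0) : Y.diag = 0 := by
  have : diagonal Y.diag = 0 := eq_zero_of_forall_re_trace_mul_eq_zero fun X => by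
    convert h X.diag using 2
    simp only [trace, diag_apply, mul_diagonal, diagonal_mul]
  simpa using congrArg diag this

end reTraceForm

section starCongrTangent

variable {ι : Type*} [Fintype ι]

def starCongrTangent (M : Matrix ι ι ℂ) : Matrix ι ι ℂ →ₗ[ℝ] Matrix ι ι ℂ where
  toFun S := Sᴴ * M + M * S
  map_add' S T := by rw [conjTranspose_add, add_mul, mul_add]; abel
  map_smul' r S := by
    rw [conjTranspose_smul, star_trivial, Matrix.smul_mul, Matrix.mul_smul, smul_add,
      RingHom.id_apply]

lemma starCongrTangent_apply (M S : Matrix ι ι ℂ) : starCongrTangent M S = Sᴴ * M + M * S :=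
  rfl

lemma re_trace_starCongrTangent_mul (M S Y : Matrix ι ι ℂ) :
    (starCongrTangent M S * Y).trace.re = (S * (Y * M + Yᴴ * Mᴴ)).trace.re := by
  have h₁ : (Sᴴ * M * Y).trace = star (S * (Yᴴ * Mᴴ)).trace := by
    rw [← trace_conjTranspose]
    simp only [conjTranspose_mul, conjTranspose_conjTranspose]
    exact (trace_mul_cycle _ _ _).symm
  have h₂ : (M * S * Y).trace = (S * (Y * M)).trace := by
    rw [trace_mul_cycle, trace_mul_cycle, Matrix.mul_assoc]
  rw [starCongrTangent_apply, add_mul, mul_add, trace_add, trace_add, add_re, add_re, h₁, h₂,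
    Complex.star_def, conj_re, add_comm]

end starCongrTangent

end Matrix

lemma Dmat_transpose (n : ℕ) : (Dmat n)ᵀ = Dmat n := by
  ext i j
  simp only [Dmat, transpose_apply, of_apply, add_comm (j : ℕ)]

lemma mul_Dmat_apply {n : ℕ} (M : Matrix (Fin n) (Fin n) ℂ) (a : Fin n) {m : ℕ} (hm : m < n) :
    (M * Dmat n) a ⟨n - 1 - m, by omega⟩ = M.extendByZero a m + I * M.extendByZero a (m + 1) := by
  let f : ℕ → ℂ := fun l =>
    M.extendByZero a l * if l + (n - 1 - m) + 1 = n then 1 else if l + (n - 1 - m) = n then I else 0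
  calc (M * Dmat n) a ⟨n - 1 - m, by omega⟩ = ∑ l ∈ Finset.range n, f l := by
        simp only [mul_apply, ← Fin.sum_univ_eq_sum_range f, f, extendByZero_val, Dmat, of_apply]
    _ = f m + f (m + 1) := by
        refine Finset.sum_eq_add _ _ (by omega) (fun l _ hl => ?_) (fun h => ?_) (fun h => ?_)
        · simp only [f]
          rw [if_neg (by omega), if_neg (by omega), mul_zero]
        · exact absurd (Finset.mem_range.mpr hm) h
        · simp only [Finset.mem_range, not_lt] at h
          simp [f, extendByZero_of_le_right _ _ h]
    _ = _ := by
        simp only [f]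
        rw [if_pos (by omega), if_neg (by omega), if_pos (by omega), mul_one, mul_comm]

lemma Dmat_mul_apply {n : ℕ} (M : Matrix (Fin n) (Fin n) ℂ) (a : Fin n) {m : ℕ} (hm : m < n) :
    (Dmat n * M) ⟨n - 1 - m, by omega⟩ a = M.extendByZero m a + I * M.extendByZero (m + 1) a := by
  rw [← transpose_apply (Dmat n * M), transpose_mul, Dmat_transpose, mul_Dmat_apply _ _ hm,
    extendByZero_transpose, extendByZero_transpose]

theorem apply_self_add_eq_of_shift_invariant {α : Type*} {v : ℕ → ℕ → α} {z : α}
    (hshift : ∀ a m, v a (m + 1) = v (a + 1) m) (h₀ : ∀ a, v a a = z)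
    (h₁ : ∀ a, v a (a + 1) = z) : ∀ d a, v a (a + d) = z
  | 0, a => h₀ a
  | 1, a => h₁ a
  | d + 2, a => by
    rw [← add_assoc, hshift, add_right_comm]
    exact apply_self_add_eq_of_shift_invariant hshift h₀ h₁ d (a + 1)

theorem eq_zero_of_add_I_mul_succ_add_conj_eq_zero {y : ℕ → ℕ → ℂ} (hdiag : ∀ a, y a a = 0)
    (h : ∀ a m, y a m + I * y a (m + 1) + conj (y m a + I * y (m + 1) a) = 0) (a m : ℕ) :
    y a m = 0 := by
  set w : ℕ → ℕ → ℂ := fun a m => y a m + conj (y m a) with hw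
  set v : ℕ → ℕ → ℂ := fun a m => y a m - conj (y m a) with hv
  have hv_succ : ∀ a m, v a (m + 1) = I * w a m := by
    intro a m
    have := h a m
    simp only [map_add, map_mul, conj_I] at this
    linear_combination (-I) * this + (y a (m + 1) - conj (y (m + 1) a)) * I_sq
  have hshift : ∀ a m, v a (m + 1) = v (a + 1) m := by
    intro a m
    have := congrArg conj (h m a)
    simp only [map_add, map_mul, map_neg, conj_I, conj_conj, neg_neg, map_zero] at this
    rw [hv_succ]
    simp only [hv, hw]
    linear_combination I * this - (y (a + 1) m - conj (y m (a + 1))) * I_sq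
  have hv_diag : ∀ a, v a a = 0 := fun a => by simp [hv, hdiag]
  have hv_zero : ∀ a m, v a m = 0 := by
    have hup := apply_self_add_eq_of_shift_invariant hshift hv_diag
      (fun a => by simp [hv_succ, hw, hdiag])
    intro a m
    rcases le_total a m with hle | hle
    · obtain ⟨d, rfl⟩ := Nat.exists_eq_add_of_le hle
      exact hup d a
    · obtain ⟨d, rfl⟩ := Nat.exists_eq_add_of_le hle
      have := congrArg conj (hup d m)
      simp only [hv, map_sub, conj_conj, map_zero] at this ⊢
      linear_combination -this
  have hw_zero : w a m = 0 := by
    have := hv_succ a m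
    rw [hv_zero] at this
    exact (mul_eq_zero.mp this.symm).resolve_left I_ne_zero
  linear_combination (hw_zero + hv_zero a m) / 2

theorem eq_zero_of_diag_eq_zero_of_mul_Dmat_add_eq_zero {n : ℕ} {Y : Matrix (Fin n) (Fin n) ℂ}
    (hdiag : Y.diag = 0) (h : Y * Dmat n + Yᴴ * (Dmat n)ᴴ = 0) : Y = 0 := by
  have hy : ∀ a m, Y.extendByZero a m = 0 := by
    refine eq_zero_of_add_I_mul_succ_add_conj_eq_zero (fun a => ?_) (fun a m => ?_)
    · by_cases ha : a < n
      · exact (extendByZero_val Y ⟨a, ha⟩ ⟨a, ha⟩).trans (congrFun hdiag ⟨a, ha⟩)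
      · exact extendByZero_of_le_left _ (not_lt.mp ha) _
    · by_cases ham : a < n ∧ m < n
      · obtain ⟨ha, hm⟩ := ham
        have := congrFun (congrFun h ⟨a, ha⟩) ⟨n - 1 - m, by omega⟩
        rwa [Matrix.add_apply, ← conjTranspose_mul, conjTranspose_apply, mul_Dmat_apply _ _ hm,
          Dmat_mul_apply _ _ hm] at this
      · have h₁ : ¬(a < n ∧ m + 1 < n) := by omega
        simp [extendByZero, ham, h₁, and_comm]
  ext a b
  simpa using hy a b

theorem range_starCongrTangent_Dmat_sup_range_diagonal (n : ℕ) :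
    LinearMap.range (starCongrTangent (Dmat n)) ⊔
      LinearMap.range (diagonalLinearMap (Fin n) ℝ ℂ) = ⊤ := by
  set W := LinearMap.range (starCongrTangent (Dmat n)) ⊔
    LinearMap.range (diagonalLinearMap (Fin n) ℝ ℂ)
  have hW : (reTraceForm (Fin n)).orthogonal W = ⊥ := by
    refine eq_bot_iff.mpr fun Y hY => ?_
    rw [LinearMap.BilinForm.mem_orthogonal_iff] at hY
    have hdiag : Y.diag = 0 := diag_eq_zero_of_forall_re_trace_diagonal_mul_eq_zero fun d =>
      hY _ (Submodule.mem_sup_right (LinearMap.mem_range_self _ d))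
    have hrel : Y * Dmat n + Yᴴ * (Dmat n)ᴴ = 0 :=
      eq_zero_of_forall_re_trace_mul_eq_zero fun S => by
        rw [← re_trace_starCongrTangent_mul]
        exact hY _ (Submodule.mem_sup_left (LinearMap.mem_range_self _ S))
    exact (Submodule.mem_bot ℝ).mpr (eq_zero_of_diag_eq_zero_of_mul_Dmat_add_eq_zero hdiag hrel)
  rw [← (reTraceForm _).orthogonal_orthogonal reTraceForm_nondegenerate
    reTraceForm_isSymm.isRefl W, hW, LinearMap.BilinForm.orthogonal_bot]

/-- For `|μ| = 1`: every `A ∈ ℂ^{n×n}` can be made diagonal by adding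
`μ(SᴴΔ_n + Δ_n S)` for some `S`. -/
theorem stmt7 (n : ℕ) (μ : ℂ) (hμ : ‖μ‖ = 1)
    (A : Matrix (Fin n) (Fin n) ℂ) :
    ∃ S : Matrix (Fin n) (Fin n) ℂ,
      (A + μ • (Sᴴ * Dmat n + Dmat n * S)).IsDiag := by
  have hμ0 : μ ≠ 0 := norm_ne_zero_iff.mp (hμ ▸ one_ne_zero)
  have hA : -μ⁻¹ • A ∈ LinearMap.range (starCongrTangent (Dmat n)) ⊔
      LinearMap.range (diagonalLinearMap (Fin n) ℝ ℂ) := by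
    rw [range_starCongrTangent_Dmat_sup_range_diagonal]
    exact Submodule.mem_top
  obtain ⟨_, ⟨S, rfl⟩, _, ⟨d, rfl⟩, hsum⟩ := Submodule.mem_sup.mp hA
  refine ⟨S, ?_⟩
  have hS : Sᴴ * Dmat n + Dmat n * S = -μ⁻¹ • A - diagonal d := eq_sub_of_add_eq hsum
  have : A + μ • (Sᴴ * Dmat n + Dmat n * S) = -(μ • diagonal d) := by
    rw [hS, smul_sub, smul_smul, mul_neg, mul_inv_cancel₀ hμ0, neg_smul, one_smul]
    abel
  rw [this]
  exact ((isDiag_diagonal d).smul μ).neg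
end

section
/- Let μ ∈ ℂ with |μ| = 1 and μ ∉ ℝ, and set k = ⌊n/2⌋. Let V be the real subspace of ℂ^{n×n} consisting of all diagonal matrices D = diag(d₁,…,d_n) with d_j ∈ ℂ arbitrary for 1 ≤ j ≤ k, with d_{k+1} ∈ ℝ in case n = 2k+1, and with all remaining diagonal entries equal to 0. Then for every A ∈ ℂ^{n×n} there exists exactly one D ∈ V such that A − D ∈ T(μΔ_n); that is, ℂ^{n×n} = T(μΔ_n) ⊕_ℝ V. -/
open Matrix

/-!
Write `E_s` for the 0/1 matrix of the antidiagonal `i + j + 1 = s` (0-based) and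
`Δ_s = E_s + i E_{s+1}`, so that `Δ_n = Δ`. If `(AB)ᴴ + BA = 0`, then `X ↦ Re tr(XB)` vanishes
on `T(A)`; for `A = μΔ` and `B = μ̄Δ_s` with `s < n` this holds because `E_s E_n = E_{s+1} E_{n+1}`.
These `n` real functionals cut out `T(μΔ)` exactly: they are onto `ℝⁿ` (already on `V`), while a
`C` with `CᴴΔ + ΔC = 0` makes both `E_n C` and `E_{n+1} C` skew-Hermitian, which forces `C` to be
upper triangular Toeplitz with imaginary entries; hence `dim T(μΔ) ≥ 2n² - n`. On a diagonal
matrix the functionals with indices `2t + 1` and `2t` read off the real and imaginary parts of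
`μ̄ d_t`, and for `n = 2k + 1` the one with index `2k` reads `Im μ · d_k` on a real `d_k`, so they
restrict to a bijection from `V` onto `ℝⁿ`.
-/

namespace CongruenceTangent

open Complex

variable {n : ℕ}

def antiDiag (n s : ℕ) : Matrix (Fin n) (Fin n) ℂ :=
  of fun i j => if (i : ℕ) + j + 1 = s then 1 else 0

def shiftedDmat (n s : ℕ) : Matrix (Fin n) (Fin n) ℂ :=
  antiDiag n s + I • antiDiag n (s + 1)

lemma Dmat_eq_shiftedDmat : Dmat n = shiftedDmat n n := by
  ext i j
  simp only [Dmat, shiftedDmat, antiDiag, of_apply, Matrix.add_apply,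
    Matrix.smul_apply, smul_eq_mul]
  split_ifs <;> first | omega | simp

lemma isHermitian_antiDiag (s : ℕ) : (antiDiag n s).IsHermitian := by
  ext i j
  simp only [antiDiag, conjTranspose_apply, of_apply, add_comm (j : ℕ)]
  split_ifs <;> simp

def natEntry (M : Matrix (Fin n) (Fin n) ℂ) (a b : ℕ) : ℂ :=
  if h : a < n ∧ b < n then M ⟨a, h.1⟩ ⟨b, h.2⟩ else 0

lemma natEntry_val (M : Matrix (Fin n) (Fin n) ℂ) (i j : Fin n) : natEntry M i j = M i j := by
  simp [natEntry]

lemma sum_ite_val_eq {M : Type*} [AddCommMonoid M] (a : ℕ) (f : Fin n → M) :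
    ∑ k : Fin n, (if (k : ℕ) = a then f k else 0) = if h : a < n then f ⟨a, h⟩ else 0 := by
  split_ifs with h
  · rw [Finset.sum_eq_single ⟨a, h⟩ (fun k _ hk => if_neg fun hka => hk (Fin.ext hka)) (by simp)]
    simp
  · exact Finset.sum_eq_zero fun k _ => if_neg fun hka => h (by omega)

lemma antiDiag_mul_apply (a : ℕ) (M : Matrix (Fin n) (Fin n) ℂ) (p q : Fin n) :
    (antiDiag n a * M) p q = if (p : ℕ) < a then natEntry M (a - 1 - p) q else 0 := by
  have key : ∀ k : Fin n, antiDiag n a p k * M k q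
      = if (p : ℕ) < a ∧ (k : ℕ) = a - 1 - p then M k q else 0 := by
    intro k
    simp only [antiDiag, of_apply]
    split_ifs <;> first | omega | simp
  simp only [mul_apply, key]
  split_ifs with hp
  · simp only [hp, true_and, sum_ite_val_eq, natEntry, q.isLt, and_true]
  · simp [hp]

lemma antiDiag_mul_antiDiag {s : ℕ} (hs : s < n) :
    antiDiag n s * antiDiag n n = antiDiag n (s + 1) * antiDiag n (n + 1) := by
  ext p q
  rw [antiDiag_mul_apply, antiDiag_mul_apply]
  simp only [natEntry, antiDiag, of_apply]
  split_ifs <;> first | rfl | omega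

section Tangent

variable {ι : Type*} [Fintype ι]

def tangentMap (A : Matrix ι ι ℂ) : Matrix ι ι ℂ →ₗ[ℝ] Matrix ι ι ℂ where
  toFun C := Cᴴ * A + A * C
  map_add' C D := by
    simp only [conjTranspose_add, Matrix.add_mul, Matrix.mul_add]
    abel
  map_smul' r C := by
    simp only [conjTranspose_smul, star_trivial, Matrix.smul_mul, Matrix.mul_smul, smul_add,
      RingHom.id_apply]

lemma Tset_eq_range (A : Matrix ι ι ℂ) : Tset A = LinearMap.range (tangentMap A) := by
  ext X
  exact ⟨fun ⟨C, h⟩ => ⟨C, h.symm⟩, fun ⟨C, h⟩ => ⟨C, h.symm⟩⟩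

lemma re_trace_mul_eq_zero_of_mem_Tset {A B X : Matrix ι ι ℂ} (hAB : (A * B)ᴴ + B * A = 0)
    (hX : X ∈ Tset A) : (trace (X * B)).re = 0 := by
  obtain ⟨C, rfl⟩ := hX
  have hBA : B * A = -(A * B)ᴴ := eq_neg_of_add_eq_zero_right hAB
  have : trace ((Cᴴ * A + A * C) * B)
      = star (trace ((A * B)ᴴ * C)) - trace ((A * B)ᴴ * C) := by
    rw [← trace_conjTranspose, conjTranspose_mul, conjTranspose_conjTranspose, Matrix.add_mul,
      trace_add, Matrix.mul_assoc, trace_mul_cycle A C B, hBA, Matrix.neg_mul, trace_neg,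
      sub_eq_add_neg]
  rw [this, Complex.sub_re, Complex.star_def, Complex.conj_re, sub_self]

lemma tangentMap_of_isHermitian {E : Matrix ι ι ℂ} (hE : E.IsHermitian) (C : Matrix ι ι ℂ) :
    tangentMap E C = (E * C)ᴴ + E * C := by
  rw [conjTranspose_mul, hE.eq]
  rfl

lemma eq_zero_of_isHermitian_add_I_smul {H K : Matrix ι ι ℂ} (hH : H.IsHermitian)
    (hK : K.IsHermitian) (h : H + I • K = 0) : H = 0 ∧ K = 0 := by
  have h' : H - I • K = 0 := by
    simpa [conjTranspose_smul, hH.eq, hK.eq, sub_eq_add_neg] using congrArg conjTranspose h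
  have hH0 : H = 0 := by linear_combination (norm := module) (2⁻¹ : ℂ) • (h + h')
  refine ⟨hH0, ?_⟩
  rw [hH0, zero_add, smul_eq_zero] at h
  exact h.resolve_left I_ne_zero

end Tangent

lemma smul_Dmat_mul_shiftedDmat_skew (μ : ℂ) {s : ℕ} (hs : s < n) :
    ((μ • Dmat n) * (star μ • shiftedDmat n s))ᴴ + (star μ • shiftedDmat n s) * (μ • Dmat n)
      = 0 := by
  have hE := antiDiag_mul_antiDiag hs
  simp only [Dmat_eq_shiftedDmat, shiftedDmat, conjTranspose_mul, conjTranspose_smul,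
    conjTranspose_add, (isHermitian_antiDiag _).eq, Matrix.mul_add, Matrix.add_mul,
    Matrix.smul_mul, Matrix.mul_smul, Complex.star_def, Complex.conj_I, Complex.conj_conj, hE]
  match_scalars <;> ring_nf
  simp only [I_sq]
  ring

def tangentForms (μ : ℂ) : Matrix (Fin n) (Fin n) ℂ →ₗ[ℝ] Fin n → ℝ where
  toFun X s := (trace (X * (star μ • shiftedDmat n s))).re
  map_add' X Y := by
    ext s
    simp only [Matrix.add_mul, trace_add, Complex.add_re, Pi.add_apply]
  map_smul' r X := by
    ext s
    simp only [Matrix.smul_mul, trace_smul, Complex.smul_re, RingHom.id_apply, Pi.smul_apply]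

lemma range_tangentMap_le_ker_tangentForms (μ : ℂ) :
    LinearMap.range (tangentMap (μ • Dmat n)) ≤ LinearMap.ker (tangentForms μ) := by
  intro X hX
  ext s
  exact re_trace_mul_eq_zero_of_mem_Tset (smul_Dmat_mul_shiftedDmat_skew μ s.isLt)
    (by rwa [Tset_eq_range])

def upperToeplitz : (Fin n → ℝ) →ₗ[ℝ] Matrix (Fin n) (Fin n) ℂ where
  toFun g := of fun u j => if h : (u : ℕ) ≤ j then I * g ⟨j - u, by omega⟩ else 0
  map_add' g g' := by
    ext u j
    simp only [of_apply, Matrix.add_apply, Pi.add_apply, ofReal_add]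
    split_ifs <;> ring
  map_smul' r g := by
    ext u j
    simp only [of_apply, Matrix.smul_apply, Pi.smul_apply, RingHom.id_apply, real_smul,
      smul_eq_mul, ofReal_mul]
    split_ifs <;> ring

lemma eq_upperToeplitz_of_shift_invariant {c : ℕ → ℕ → ℂ}
    (hshift : ∀ u b, u + 1 < n → b + 1 < n → c (u + 1) (b + 1) = c u b)
    (hcol : ∀ w, w + 1 < n → c (w + 1) 0 = 0) :
    ∀ u j, u < n → j < n → c u j = if u ≤ j then c 0 (j - u) else 0 := by
  intro u
  induction u with
  | zero => simp
  | succ u ih =>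
    rintro (_ | b) hu hb
    · simp [hcol u hu]
    · rw [hshift u b hu hb, ih b (by omega) (by omega)]
      simp

lemma upperToeplitz_of_skew {c : ℕ → ℕ → ℂ} (hout : ∀ b, c n b = 0)
    (hskew : ∀ p q, p < n → q < n → star (c (n - 1 - q) p) + c (n - 1 - p) q = 0)
    (hskew' : ∀ p q, p < n → q < n → star (c (n - q) p) + c (n - p) q = 0) :
    ∀ u j, u < n → j < n → c u j = if u ≤ j then I * (c 0 (j - u)).im else 0 := by
  have hshift : ∀ u b, u + 1 < n → b + 1 < n → c (u + 1) (b + 1) = c u b := by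
    intro u b hu hb
    have h := hskew' (n - (u + 1)) (b + 1) (by omega) hb
    have h' := hskew (n - 1 - u) b (by omega) (by omega)
    rw [show n - (n - (u + 1)) = u + 1 by omega, show n - (b + 1) = n - 1 - b by omega] at h
    rw [show n - 1 - (n - 1 - u) = u by omega, show n - 1 - u = n - (u + 1) by omega] at h'
    exact add_left_cancel (h.trans h'.symm)
  have hcol : ∀ w, w + 1 < n → c (w + 1) 0 = 0 := by
    intro w hw
    simpa [show n - (n - (w + 1)) = w + 1 by omega, hout] using
      hskew' (n - (w + 1)) 0 (by omega) (by omega)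
  have htoep := eq_upperToeplitz_of_shift_invariant hshift hcol
  have hre : ∀ m, m < n → (c 0 m).re = 0 := by
    intro m hm
    have h := congrArg re (hskew (n - 1) m (by omega) hm)
    rw [htoep (n - 1 - m) (n - 1) (by omega) (by omega), if_pos (by omega),
      show n - 1 - (n - 1) = 0 by omega, show n - 1 - (n - 1 - m) = m by omega] at h
    simpa using h
  intro u j hu hj
  rw [htoep u j hu hj]
  split_ifs with huj
  · apply Complex.ext <;> simp [hre _ (by omega : j - u < n)]
  · rfl

lemma ker_tangentMap_le_range_upperToeplitz {μ : ℂ} (hμ : μ ≠ 0) :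
    LinearMap.ker (tangentMap (μ • Dmat n)) ≤ LinearMap.range upperToeplitz := by
  intro C hC
  have hsplit : tangentMap (antiDiag n n) C + I • tangentMap (antiDiag n (n + 1)) C = 0 := by
    have : μ • (tangentMap (antiDiag n n) C + I • tangentMap (antiDiag n (n + 1)) C) = 0 := by
      rw [← hC]
      simp only [tangentMap, LinearMap.coe_mk, AddHom.coe_mk, Dmat_eq_shiftedDmat, shiftedDmat,
        Matrix.mul_add, Matrix.add_mul, Matrix.mul_smul, Matrix.smul_mul, smul_add]
      abel
    exact (smul_eq_zero.mp this).resolve_left hμ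
  rw [tangentMap_of_isHermitian (isHermitian_antiDiag _),
    tangentMap_of_isHermitian (isHermitian_antiDiag _)] at hsplit
  obtain ⟨h0, h1⟩ := eq_zero_of_isHermitian_add_I_smul (isHermitian_transpose_add_self _)
    (isHermitian_transpose_add_self _) hsplit
  have hc := upperToeplitz_of_skew (n := n) (c := natEntry C) (fun b => dif_neg (by omega))
    (fun p q hp hq => by
      simpa [-conjTranspose_mul, antiDiag_mul_apply, hp, hq] using
        congrFun (congrFun h0 ⟨p, hp⟩) ⟨q, hq⟩)
    (fun p q hp hq => by
      simpa [-conjTranspose_mul, antiDiag_mul_apply, hp.trans (Nat.lt_succ_self n),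
        hq.trans (Nat.lt_succ_self n)] using congrFun (congrFun h1 ⟨p, hp⟩) ⟨q, hq⟩)
  refine ⟨fun m => (natEntry C 0 m).im, ?_⟩
  ext u j
  rw [← natEntry_val C, hc u j u.isLt j.isLt]
  rfl

lemma trace_diagonal_mul_antiDiag (d : Fin n → ℂ) (s : ℕ) :
    trace (diagonal d * antiDiag n s) = ∑ p : Fin n, if 2 * (p : ℕ) + 1 = s then d p else 0 := by
  simp only [trace, diag_apply, diagonal_mul, antiDiag, of_apply, mul_ite, mul_one, mul_zero,
    two_mul]

lemma trace_diagonal_mul_antiDiag_odd (d : Fin n → ℂ) {t : ℕ} (ht : t < n) :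
    trace (diagonal d * antiDiag n (2 * t + 1)) = d ⟨t, ht⟩ := by
  rw [trace_diagonal_mul_antiDiag]
  calc _ = ∑ p : Fin n, if (p : ℕ) = t then d p else 0 :=
        Finset.sum_congr rfl fun p _ => if_congr (by omega) rfl rfl
    _ = d ⟨t, ht⟩ := by rw [sum_ite_val_eq, dif_pos ht]

lemma trace_diagonal_mul_antiDiag_even (d : Fin n → ℂ) (t : ℕ) :
    trace (diagonal d * antiDiag n (2 * t)) = 0 := by
  rw [trace_diagonal_mul_antiDiag]
  exact Finset.sum_eq_zero fun p _ => if_neg (by omega)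

lemma tangentForms_diagonal_odd (μ : ℂ) (d : Fin n → ℂ) {t : ℕ} (ht : 2 * t + 1 < n) :
    tangentForms μ (diagonal d) ⟨2 * t + 1, ht⟩ = (star μ * d ⟨t, by omega⟩).re := by
  simp only [tangentForms, LinearMap.coe_mk, AddHom.coe_mk, shiftedDmat, Matrix.mul_smul,
    Matrix.mul_add, trace_smul, trace_add, trace_diagonal_mul_antiDiag_odd d (by omega : t < n),
    show 2 * t + 1 + 1 = 2 * (t + 1) by ring, trace_diagonal_mul_antiDiag_even, mul_zero,
    add_zero, smul_eq_mul]

lemma tangentForms_diagonal_even (μ : ℂ) (d : Fin n → ℂ) {t : ℕ} (ht : 2 * t < n) :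
    tangentForms μ (diagonal d) ⟨2 * t, ht⟩ = -(star μ * d ⟨t, by omega⟩).im := by
  simp only [tangentForms, LinearMap.coe_mk, AddHom.coe_mk, shiftedDmat, Matrix.mul_smul,
    Matrix.mul_add, trace_smul, trace_add, trace_diagonal_mul_antiDiag_odd d (by omega : t < n),
    trace_diagonal_mul_antiDiag_even, zero_add, smul_eq_mul]
  simp [mul_left_comm]

def halfDiag (n : ℕ) : Set (Matrix (Fin n) (Fin n) ℂ) :=
  {D | (∀ p q : Fin n, p ≠ q → D p q = 0) ∧ (∀ p : Fin n, n / 2 < (p : ℕ) → D p p = 0) ∧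
    ∀ p : Fin n, (p : ℕ) = n / 2 → (n % 2 = 1 → (D p p).im = 0) ∧ (n % 2 = 0 → D p p = 0)}

noncomputable def diagSection (μ : ℂ) (c : Fin n → ℝ) : Matrix (Fin n) (Fin n) ℂ :=
  diagonal fun p =>
    if h : 2 * (p : ℕ) + 1 < n then (c ⟨2 * p + 1, h⟩ - I * c ⟨2 * p, by omega⟩) / star μ
    else if h : 2 * (p : ℕ) + 1 = n then ((c ⟨2 * p, by omega⟩ / μ.im : ℝ) : ℂ)
    else 0

lemma diagSection_mem_halfDiag (μ : ℂ) (c : Fin n → ℝ) : diagSection μ c ∈ halfDiag n := by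
  refine ⟨fun p q hpq => diagonal_apply_ne _ hpq, fun p hp => ?_,
    fun p hp => ⟨fun hn => ?_, fun hn => ?_⟩⟩
  · rw [diagSection, diagonal_apply_eq, dif_neg (by omega), dif_neg (by omega)]
  · rw [diagSection, diagonal_apply_eq, dif_neg (by omega), dif_pos (by omega), ofReal_im]
  · rw [diagSection, diagonal_apply_eq, dif_neg (by omega), dif_neg (by omega)]

lemma tangentForms_diagSection {μ : ℂ} (hμ : μ.im ≠ 0) (c : Fin n → ℝ) :
    tangentForms μ (diagSection μ c) = c := by
  have hμ0 : star μ ≠ 0 := star_ne_zero.mpr fun h => hμ (by simp [h])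
  ext ⟨s, hs⟩
  obtain ⟨t, rfl | rfl⟩ := Nat.even_or_odd' s
  · rw [diagSection, tangentForms_diagonal_even]
    by_cases h : 2 * t + 1 < n
    · simp only [dif_pos h, mul_div_cancel₀ _ hμ0]
      simp
    · simp only [dif_neg h, dif_pos (by omega : 2 * t + 1 = n)]
      simp [field]
  · rw [diagSection, tangentForms_diagonal_odd]
    simp only [dif_pos hs, mul_div_cancel₀ _ hμ0]
    simp

lemma diagSection_tangentForms {μ : ℂ} (hμ : μ.im ≠ 0) {D : Matrix (Fin n) (Fin n) ℂ}
    (hD : D ∈ halfDiag n) :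
    diagSection μ (tangentForms μ D) = D := by
  have hμ0 : star μ ≠ 0 := star_ne_zero.mpr fun h => hμ (by simp [h])
  obtain ⟨hoff, hgt, hmid⟩ := hD
  obtain ⟨d, rfl⟩ : ∃ d, D = diagonal d := ⟨_, (IsDiag.diagonal_diag hoff).symm⟩
  simp only [diagonal_apply_eq] at hgt hmid
  rw [diagSection]
  congr 1
  funext p
  split_ifs with h1 h2
  · rw [tangentForms_diagonal_odd μ d h1, tangentForms_diagonal_even μ d (by omega), Fin.eta,
      ofReal_neg, mul_neg, sub_neg_eq_add, mul_comm I, re_add_im, mul_div_cancel_left₀ _ hμ0]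
  · have him : (d p).im = 0 := (hmid p (by omega)).1 (by omega)
    rw [tangentForms_diagonal_even μ d (by omega), Fin.eta]
    apply Complex.ext <;> simp [him]
    field_simp
  · by_cases hp : (p : ℕ) = n / 2
    · exact ((hmid p hp).2 (by omega)).symm
    · exact (hgt p (by omega)).symm

theorem range_tangentMap_eq_ker_tangentForms {μ : ℂ} (hμ : μ.im ≠ 0) :
    LinearMap.range (tangentMap (μ • Dmat n)) = LinearMap.ker (tangentForms μ) := by
  have hμ0 : μ ≠ 0 := fun h => hμ (by simp [h])
  have hsurj : LinearMap.range (tangentForms (n := n) μ) = ⊤ :=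
    LinearMap.range_eq_top.mpr fun c => ⟨diagSection μ c, tangentForms_diagSection hμ c⟩
  have hker : Module.finrank ℝ (LinearMap.ker (tangentMap (μ • Dmat n))) ≤ n :=
    (Submodule.finrank_mono (ker_tangentMap_le_range_upperToeplitz hμ0)).trans
      (upperToeplitz.finrank_range_le.trans (Module.finrank_fin_fun ℝ).le)
  have hψ := (tangentMap (μ • Dmat n)).finrank_range_add_finrank_ker
  have hτ := (tangentForms (n := n) μ).finrank_range_add_finrank_ker
  rw [hsurj, finrank_top, Module.finrank_fin_fun] at hτ
  exact Submodule.eq_of_le_of_finrank_le (range_tangentMap_le_ker_tangentForms μ) (by omega)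

end CongruenceTangent

open CongruenceTangent

theorem stmt8_general (n : ℕ) (μ : ℂ) (h2 : μ.im ≠ 0)
    (A : Matrix (Fin n) (Fin n) ℂ) :
    ∃! D : Matrix (Fin n) (Fin n) ℂ,
      ((∀ p q : Fin n, p ≠ q → D p q = 0) ∧
       (∀ p : Fin n, n / 2 < (p : ℕ) → D p p = 0) ∧
       (∀ p : Fin n, (p : ℕ) = n / 2 →
          (n % 2 = 1 → (D p p).im = 0) ∧ (n % 2 = 0 → D p p = 0))) ∧
      A - D ∈ Tset (μ • Dmat n) := by
  have hT : ∀ X, X ∈ Tset (μ • Dmat n) ↔ tangentForms μ X = 0 := fun X => by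
    rw [Tset_eq_range, SetLike.mem_coe, range_tangentMap_eq_ker_tangentForms h2, LinearMap.mem_ker]
  refine ⟨diagSection μ (tangentForms μ A), ⟨diagSection_mem_halfDiag μ _, ?_⟩, ?_⟩
  · rw [hT, map_sub, tangentForms_diagSection h2, sub_self]
  · rintro D ⟨hD, hAD⟩
    rw [hT, map_sub, sub_eq_zero] at hAD
    rw [hAD, diagSection_tangentForms h2 hD]

/-- For `|μ| = 1`, `μ ∉ ℝ`, `k = ⌊n/2⌋`: `ℂ^{n×n} = T(μΔ_n) ⊕_ℝ V`, where `V` is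
the space of diagonal matrices with arbitrary complex entries at positions
`1,…,k`, a real entry at position `k+1` when `n = 2k+1`, and zeros elsewhere. -/
theorem stmt8 (n : ℕ) (μ : ℂ) (h1 : ‖μ‖ = 1) (h2 : μ.im ≠ 0)
    (A : Matrix (Fin n) (Fin n) ℂ) :
    ∃! D : Matrix (Fin n) (Fin n) ℂ,
      ((∀ p q : Fin n, p ≠ q → D p q = 0) ∧
       (∀ p : Fin n, n / 2 < (p : ℕ) → D p p = 0) ∧
       (∀ p : Fin n, (p : ℕ) = n / 2 →
          (n % 2 = 1 → (D p p).im = 0) ∧ (n % 2 = 0 → D p p = 0))) ∧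
      A - D ∈ Tset (μ • Dmat n) :=
  stmt8_general n μ h2 A
end

section
/- For every A ∈ ℂ^{n×n} there exists exactly one matrix D ∈ ℂ^{n×n} whose nonzero entries are confined to the first-column positions (n,1), (n−2,1), (n−4,1), … (i.e., positions (n−2t, 1) for integers t with 0 ≤ t < ⌈n/2⌉) such that A − D ∈ T(J_n(0)); that is, ℂ^{n×n} = T(J_n(0)) ⊕_ℝ V, where V is the complex subspace of matrices supported on these ⌈n/2⌉ positions. -/
open Matrix

/-!
Write `L C = Cᴴ J + J C` for `J = J_n(0)`. Entrywise `(L C)ᵢⱼ = conj C_{j-1,i} + C_{i+1,j}`,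
an entry with an index out of range being read as `0`. If `L C` vanishes off the first column,
then `C_{p,q} = -conj C_{q+1,p+1}`; applied twice, this moves an entry two steps down its diagonal
unchanged, and chasing an entry above the diagonal to the boundary shows that it vanishes when
`n - q` is odd. This forces `T(J) ∩ V = 0`, and it shows that an element of `ker L` is
determined by the `⌈n/2⌉` entries `C_{0,b}` with `b = 0` or `n - b` even, so that
`dim_ℝ ker L ≤ dim_ℝ V`. Rank–nullity then gives `T(J) ⊕ V = ℂ^{n×n}`.
-/

theorem LinearMap.isCompl_range_of_finrank_ker_le {K E : Type*} [DivisionRing K]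
    [AddCommGroup E] [Module K E] [FiniteDimensional K E] (f : E →ₗ[K] E)
    {V : Submodule K E} (hdisj : Disjoint (LinearMap.range f) V)
    (hker : Module.finrank K (LinearMap.ker f) ≤ Module.finrank K V) :
    IsCompl (LinearMap.range f) V := by
  refine (Submodule.isCompl_iff_disjoint _ _ ?_).mpr hdisj
  have := f.finrank_range_add_finrank_ker
  omega

theorem Submodule.existsUnique_mem_sub_mem_of_isCompl {R E : Type*} [Ring R] [AddCommGroup E]
    [Module R E] {W V : Submodule R E} (h : IsCompl W V) (x : E) : ∃! v, v ∈ V ∧ x - v ∈ W := by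
  obtain ⟨w, v, hwv, huniq⟩ := Submodule.existsUnique_add_of_isCompl h x
  refine ⟨v, ⟨v.2, by rw [← hwv, add_sub_cancel_right]; exact w.2⟩, ?_⟩
  rintro v' ⟨hv', hxv'⟩
  exact congrArg Subtype.val (huniq ⟨_, hxv'⟩ ⟨v', hv'⟩ (sub_add_cancel x v')).2

namespace Matrix

section Support

variable {m n α : Type*} [AddCommMonoid α]

def supportedOn (R : Type*) [Semiring R] [Module R α] (P : m → n → Prop) :
    Submodule R (Matrix m n α) where
  carrier := {D | ∀ i j, D i j ≠ 0 → P i j}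
  zero_mem' _ _ h := absurd rfl h
  add_mem' {a b} ha hb i j h := by
    by_contra hP
    rw [add_apply, not_imp_comm.mp (ha i j) hP, not_imp_comm.mp (hb i j) hP, add_zero] at h
    exact h rfl
  smul_mem' r a ha i j h := by
    by_contra hP
    rw [smul_apply, not_imp_comm.mp (ha i j) hP, smul_zero] at h
    exact h rfl

end Support

def tangentMap {ι : Type*} [Fintype ι] (A : Matrix ι ι ℂ) : Matrix ι ι ℂ →ₗ[ℝ] Matrix ι ι ℂ where
  toFun C := Cᴴ * A + A * C
  map_add' C₁ C₂ := by
    rw [conjTranspose_add, Matrix.add_mul, Matrix.mul_add]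
    abel
  map_smul' r C := by
    rw [conjTranspose_smul, star_trivial, Matrix.smul_mul, Matrix.mul_smul, RingHom.id_apply,
      smul_add]

theorem Tset_eq_range_tangentMap {ι : Type*} [Fintype ι] (A : Matrix ι ι ℂ) :
    Tset A = LinearMap.range (tangentMap A) := by
  ext X
  exact ⟨fun ⟨C, hC⟩ => ⟨C, hC.symm⟩, fun ⟨C, hC⟩ => ⟨C, hC.symm⟩⟩

section NatEntry

variable {α : Type*} {n : ℕ}

def natEntry [Zero α] (M : Matrix (Fin n) (Fin n) α) (a b : ℕ) : α :=
  if h : a < n ∧ b < n then M ⟨a, h.1⟩ ⟨b, h.2⟩ else 0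

@[simp]
theorem natEntry_val [Zero α] (M : Matrix (Fin n) (Fin n) α) (i j : Fin n) : M.natEntry i j = M i j := by
  simp [natEntry]

theorem natEntry_of_le [Zero α] {M : Matrix (Fin n) (Fin n) α} {a b : ℕ} (h : n ≤ a ∨ n ≤ b) :
    M.natEntry a b = 0 :=
  dif_neg (by omega)

theorem natEntry_add [AddZeroClass α] (M N : Matrix (Fin n) (Fin n) α) (a b : ℕ) :
    (M + N).natEntry a b = M.natEntry a b + N.natEntry a b := by
  unfold natEntry
  split_ifs <;> simp

theorem natEntry_smul {R : Type*} [Zero α] [SMulZeroClass R α] (r : R)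
    (M : Matrix (Fin n) (Fin n) α) (a b : ℕ) : (r • M).natEntry a b = r • M.natEntry a b := by
  unfold natEntry
  split_ifs <;> simp

end NatEntry

section Jordan

variable {n : ℕ}

theorem Jmat_zero_apply (i j : Fin n) : Jmat n 0 i j = if (j : ℕ) = i + 1 then 1 else 0 := by
  simp only [Jmat, of_apply]
  split_ifs <;> first | rfl | omega

theorem Jmat_zero_mul_apply (M : Matrix (Fin n) (Fin n) ℂ) (i j : Fin n) :
    (Jmat n 0 * M) i j = M.natEntry (i + 1) j := by
  rw [mul_apply]
  by_cases hi : (i : ℕ) + 1 < n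
  · rw [Fintype.sum_eq_single ⟨i + 1, hi⟩ fun k hk => ?_]
    · simp [Jmat_zero_apply, natEntry, hi]
    · rw [Jmat_zero_apply, if_neg (fun h => hk (Fin.ext h)), zero_mul]
  · rw [natEntry_of_le (Or.inl (by omega))]
    exact Finset.sum_eq_zero fun k _ => by rw [Jmat_zero_apply, if_neg (by omega), zero_mul]

theorem conjTranspose_mul_Jmat_zero_apply (M : Matrix (Fin n) (Fin n) ℂ) (i j : Fin n) :
    (Mᴴ * Jmat n 0) i j = if (j : ℕ) = 0 then 0 else star (M.natEntry (j - 1) i) := by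
  rw [mul_apply]
  split_ifs with hj
  · exact Finset.sum_eq_zero fun k _ => by rw [Jmat_zero_apply, if_neg (by omega), mul_zero]
  · rw [Fintype.sum_eq_single ⟨j - 1, by omega⟩ fun k hk => ?_]
    · simp [Jmat_zero_apply, natEntry, show (j : ℕ) - 1 + 1 = j by omega,
        show (j : ℕ) - 1 < n by omega]
    · rw [Jmat_zero_apply, if_neg (fun h => hk (Fin.ext (by simp; omega))), mul_zero]

theorem tangentMap_Jmat_zero_apply (C : Matrix (Fin n) (Fin n) ℂ) (i j : Fin n) :
    tangentMap (Jmat n 0) C i j =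
      (if (j : ℕ) = 0 then 0 else star (C.natEntry (j - 1) i)) + C.natEntry (i + 1) j := by
  simp only [tangentMap, LinearMap.coe_mk, AddHom.coe_mk, add_apply,
    conjTranspose_mul_Jmat_zero_apply, Jmat_zero_mul_apply]

theorem tangentMap_Jmat_zero_apply_zero (C : Matrix (Fin n) (Fin n) ℂ) (i : Fin n) :
    tangentMap (Jmat n 0) C i ⟨0, i.pos⟩ = C.natEntry (i + 1) 0 := by
  simp [tangentMap_Jmat_zero_apply]

theorem natEntry_eq_neg_star_of_tangentMap_Jmat_zero {C : Matrix (Fin n) (Fin n) ℂ}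
    (hC : ∀ i j : Fin n, (j : ℕ) ≠ 0 → tangentMap (Jmat n 0) C i j = 0) {p q : ℕ}
    (hp : p + 2 ≤ n) : C.natEntry p q = -star (C.natEntry (q + 1) (p + 1)) := by
  by_cases hq : q < n
  · have h := hC ⟨q, hq⟩ ⟨p + 1, by omega⟩ (by simp)
    rw [tangentMap_Jmat_zero_apply, if_neg (by simp)] at h
    simp only [add_tsub_cancel_right] at h
    rw [← star_star (C.natEntry p q), eq_neg_of_add_eq_zero_left h, star_neg]
  · rw [natEntry_of_le (Or.inr (by omega)), natEntry_of_le (Or.inl (by omega)), star_zero,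
      neg_zero]

end Jordan

end Matrix

section SkewReflection

variable {R : Type*} [AddCommGroup R] [StarAddMonoid R] {n : ℕ} {c : ℕ → ℕ → R}

theorem eq_zero_of_skew_reflection (hrel : ∀ p q, p + 2 ≤ n → c p q = -star (c (q + 1) (p + 1)))
    (hn : ∀ b, c n b = 0) {p q k : ℕ} (hpq : p < q) (hq : q + 2 * k + 1 = n) : c p q = 0 := by
  induction k generalizing p q with
  | zero => rw [hrel p q (by omega), show q + 1 = n by omega, hn, star_zero, neg_zero]
  | succ k ih =>
    rw [hrel p q (by omega), hrel (q + 1) (p + 1) (by omega), star_neg, star_star, neg_neg]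
    exact ih (by omega) (by omega)

theorem eq_zero_of_skew_reflection_of_row_col
    (hrel : ∀ p q, p + 2 ≤ n → c p q = -star (c (q + 1) (p + 1)))
    (hout : ∀ a b, n ≤ b → c a b = 0) (hrow : ∀ b, c 0 b = 0) (hcol : ∀ a, c (a + 1) 0 = 0)
    (a b : ℕ) : c a b = 0 := by
  suffices h : ∀ a b, c a b = 0 ∧ c b a = 0 from (h a b).1
  intro a
  induction a with
  | zero => exact fun b => ⟨hrow b, by rcases b with _ | b; exacts [hrow 0, hcol b]⟩
  | succ a ih =>
    rintro (_ | b)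
    · exact ⟨hcol a, hrow _⟩
    constructor
    · by_cases hb : b + 2 ≤ n
      · have h := (ih b).2
        rwa [hrel b a hb, neg_eq_zero, star_eq_zero] at h
      · exact hout _ _ (by omega)
    · by_cases ha : a + 2 ≤ n
      · have h := (ih b).1
        rwa [hrel a b ha, neg_eq_zero, star_eq_zero] at h
      · exact hout _ _ (by omega)

end SkewReflection

section JordanNormalForm

variable {n : ℕ}

def IsNormalFormPos (n : ℕ) (p q : Fin n) : Prop :=
  (q : ℕ) = 0 ∧ ∃ t, (p : ℕ) + 2 * t + 1 = n

noncomputable def normalFormSpace (n : ℕ) : Submodule ℝ (Matrix (Fin n) (Fin n) ℂ) :=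
  supportedOn ℝ (IsNormalFormPos n)

theorem mem_normalFormSpace {D : Matrix (Fin n) (Fin n) ℂ} :
    D ∈ normalFormSpace n ↔ ∀ p q, D p q ≠ 0 → IsNormalFormPos n p q :=
  Iff.rfl

theorem disjoint_range_tangentMap_Jmat_zero :
    Disjoint (LinearMap.range (tangentMap (Jmat n 0))) (normalFormSpace n) := by
  rw [Submodule.disjoint_def]
  rintro _ ⟨C, rfl⟩ hV
  rw [mem_normalFormSpace] at hV
  have hrel : ∀ p q, p + 2 ≤ n → C.natEntry p q = -star (C.natEntry (q + 1) (p + 1)) :=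
    fun _ _ => natEntry_eq_neg_star_of_tangentMap_Jmat_zero
      fun i j hj => by_contra fun h => hj (hV i j h).1
  ext p q
  by_cases hpq : IsNormalFormPos n p q
  · obtain ⟨hq, t, ht⟩ := hpq
    obtain rfl : q = ⟨0, p.pos⟩ := Fin.ext hq
    rw [tangentMap_Jmat_zero_apply_zero, Matrix.zero_apply]
    rcases t with _ | t
    · exact natEntry_of_le (Or.inl (by omega))
    · rw [hrel _ _ (by omega), eq_zero_of_skew_reflection hrel
        (fun _ => natEntry_of_le (Or.inl le_rfl)) (k := t) (by omega) (by omega), star_zero,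
        neg_zero]
  · exact by_contra fun h => hpq (hV p q h)

/-- Moves the entries of row `0` that are not forced to vanish on the kernel of
`tangentMap (Jmat n 0)` to the positions of `normalFormSpace n`; for odd `n` the row `p = 0`
receives the entry `(0, 0)` through truncated subtraction. -/
def freeEntries (n : ℕ) : Matrix (Fin n) (Fin n) ℂ →ₗ[ℝ] Matrix (Fin n) (Fin n) ℂ where
  toFun C := of fun p q => if (q : ℕ) = 0 ∧ Odd (n - p) then C.natEntry 0 (p - 1) else 0
  map_add' C D := by
    ext p q
    simp only [of_apply, Matrix.add_apply, natEntry_add]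
    split_ifs <;> simp
  map_smul' r C := by
    ext p q
    simp only [of_apply, Matrix.smul_apply, natEntry_smul, RingHom.id_apply]
    split_ifs <;> simp

theorem freeEntries_mem (C : Matrix (Fin n) (Fin n) ℂ) :
    freeEntries n C ∈ normalFormSpace n := by
  rw [mem_normalFormSpace]
  intro p q h
  by_contra hpq
  refine h (if_neg ?_)
  rintro ⟨hq, t, ht⟩
  exact hpq ⟨hq, t, by omega⟩

theorem eq_zero_of_tangentMap_Jmat_zero_eq_zero {C : Matrix (Fin n) (Fin n) ℂ}
    (hC : tangentMap (Jmat n 0) C = 0) (hfree : freeEntries n C = 0) : C = 0 := by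
  have hrel : ∀ p q, p + 2 ≤ n → C.natEntry p q = -star (C.natEntry (q + 1) (p + 1)) :=
    fun _ _ => natEntry_eq_neg_star_of_tangentMap_Jmat_zero fun i j _ => by rw [hC]; rfl
  have hcol : ∀ a, C.natEntry (a + 1) 0 = 0 := by
    intro a
    by_cases ha : a < n
    · rw [← tangentMap_Jmat_zero_apply_zero C ⟨a, ha⟩, hC]
      rfl
    · exact natEntry_of_le (Or.inl (by omega))
  have hrow : ∀ b, C.natEntry 0 b = 0 := by
    intro b
    by_cases hb : n ≤ b
    · exact natEntry_of_le (Or.inr hb)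
    by_cases hforced : 0 < b ∧ Odd (n - b)
    · obtain ⟨k, hk⟩ := hforced.2
      exact eq_zero_of_skew_reflection hrel (fun _ => natEntry_of_le (Or.inl le_rfl)) (k := k)
        hforced.1 (by omega)
    · obtain ⟨p, hp, rfl⟩ : ∃ p : Fin n, Odd (n - p) ∧ (p : ℕ) - 1 = b := by
        simp only [Nat.odd_iff] at hforced ⊢
        by_cases hpar : (n - b) % 2 = 0
        · exact ⟨⟨b + 1, by omega⟩, by simp only; omega, by simp⟩
        · exact ⟨⟨0, by omega⟩, by simp only; omega, by simp only; omega⟩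
      simpa [freeEntries, hp] using congrFun (congrFun hfree p) ⟨0, p.pos⟩
  ext i j
  simpa using eq_zero_of_skew_reflection_of_row_col hrel (fun _ _ => natEntry_of_le ∘ Or.inr)
    hrow hcol i j

theorem finrank_ker_tangentMap_Jmat_zero_le :
    Module.finrank ℝ (LinearMap.ker (tangentMap (Jmat n 0))) ≤
      Module.finrank ℝ (normalFormSpace n) := by
  refine LinearMap.finrank_le_finrank_of_injective
    (f := ((freeEntries n).domRestrict (LinearMap.ker (tangentMap (Jmat n 0)))).codRestrict
      (normalFormSpace n) fun C => freeEntries_mem (C : Matrix (Fin n) (Fin n) ℂ)) ?_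
  rw [← LinearMap.ker_eq_bot, LinearMap.ker_eq_bot']
  intro C hC
  exact Subtype.ext (eq_zero_of_tangentMap_Jmat_zero_eq_zero C.2 (congrArg Subtype.val hC))

theorem isCompl_range_tangentMap_Jmat_zero :
    IsCompl (LinearMap.range (tangentMap (Jmat n 0))) (normalFormSpace n) :=
  LinearMap.isCompl_range_of_finrank_ker_le _ disjoint_range_tangentMap_Jmat_zero
    finrank_ker_tangentMap_Jmat_zero_le

end JordanNormalForm

/-- `ℂ^{n×n} = T(J_n(0)) ⊕_ℝ V`, where `V` consists of the matrices supported on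
the first-column positions `(n,1), (n−2,1), (n−4,1), …` . -/
theorem stmt10 (n : ℕ) (A : Matrix (Fin n) (Fin n) ℂ) :
    ∃! D : Matrix (Fin n) (Fin n) ℂ,
      (∀ p q : Fin n, D p q ≠ 0 →
        (q : ℕ) = 0 ∧ ∃ t : ℕ, (p : ℕ) + 2 * t + 1 = n) ∧
      A - D ∈ Tset (Jmat n 0) := by
  rw [Tset_eq_range_tangentMap]
  exact Submodule.existsUnique_mem_sub_mem_of_isCompl isCompl_range_tangentMap_Jmat_zero A
end

section
/- Let λ, λ' ∈ ℂ with |λ| > 1, |λ'| > 1 and λ ≠ λ'. Then the map (S,R) ↦ (S*·H_m(λ) + H_n(λ')·R, R*·H_n(λ') + H_m(λ)·S), where S ∈ ℂ^{2m×2n} and R ∈ ℂ^{2n×2m}, is surjective onto ℂ^{2n×2m} × ℂ^{2m×2n}; equivalently, T(H_m(λ), H_n(λ')) = ℂ^{2n×2m} × ℂ^{2m×2n}. -/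
/-!
`H = H_m(λ)` and `H' = H_n(λ')` are invertible. Solving the first equation for `S*` and
substituting into the second turns the problem into the Sylvester equation `L R - R K = C` with
`K = H⁻¹ H*` and `L = H'⁻¹ H'*`. It is solvable for every `C` once `σ(L) ∩ σ(K) = ∅`: by
Cayley–Hamilton, `χ_K(L)` annihilates every solution of `L R = R K`, and it is invertible by the
spectral mapping theorem. Here `K = diag(J_m(λ)⁻¹, J_m(λ)*)` has spectrum in
`{λ⁻¹, conj λ}`, similarly for `L`, and these sets are disjoint because `λ ≠ λ'` and
`|λ|, |λ'| > 1`.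
-/

open Matrix

open Polynomial

section Sylvester
variable {𝕜 α β : Type*} [Field 𝕜] [Fintype α] [DecidableEq α] [Fintype β]
  [DecidableEq β] {L : Matrix β β 𝕜} {K : Matrix α α 𝕜} {R : Matrix β α 𝕜}

theorem Matrix.pow_mul_eq_mul_pow_of_mul_eq (h : L * R = R * K) (n : ℕ) :
    L ^ n * R = R * K ^ n := by
  induction n with
  | zero => simp
  | succ n ih =>
    rw [pow_succ, pow_succ, Matrix.mul_assoc, h, ← Matrix.mul_assoc, ih, Matrix.mul_assoc]

theorem Matrix.aeval_mul_eq_mul_aeval_of_mul_eq (h : L * R = R * K) (p : 𝕜[X]) :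
    aeval L p * R = R * aeval K p := by
  induction p using Polynomial.induction_on' with
  | add p q hp hq => simp only [map_add, Matrix.add_mul, Matrix.mul_add, hp, hq]
  | monomial n a =>
    simp only [aeval_monomial, Algebra.algebraMap_eq_smul_one, Matrix.smul_mul, Matrix.mul_smul,
      Matrix.one_mul, Matrix.pow_mul_eq_mul_pow_of_mul_eq h]

theorem Matrix.exists_mul_sub_mul_eq_of_disjoint_spectrum [IsAlgClosed 𝕜]
    (h : Disjoint (spectrum 𝕜 L) (spectrum 𝕜 K)) (C : Matrix β α 𝕜) :
    ∃ X : Matrix β α 𝕜, L * X - X * K = C := by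
  let f : Matrix β α 𝕜 →ₗ[𝕜] Matrix β α 𝕜 :=
    { toFun := fun X => L * X - X * K
      map_add' := fun X Y => by simp only [Matrix.mul_add, Matrix.add_mul]; abel
      map_smul' := fun c X => by simp [Matrix.mul_smul, Matrix.smul_mul, smul_sub] }
  suffices hf : Function.Injective f from LinearMap.injective_iff_surjective.mp hf C
  rcases isEmpty_or_nonempty α with _ | _
  · exact fun _ _ _ => Subsingleton.elim _ _
  rw [← LinearMap.ker_eq_bot, LinearMap.ker_eq_bot']
  intro X hX
  have hcomm : L * X = X * K := sub_eq_zero.mp hX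
  have hunit : IsUnit (aeval L K.charpoly) := by
    rw [← spectrum.zero_notMem_iff 𝕜, spectrum.map_polynomial_aeval_of_degree_pos L _
      (by rw [charpoly_degree_eq_dim]; exact_mod_cast Fintype.card_pos)]
    rintro ⟨μ, hμL, hμ⟩
    exact h.ne_of_mem hμL (mem_spectrum_iff_isRoot_charpoly.mpr hμ) rfl
  have hzero := Matrix.aeval_mul_eq_mul_aeval_of_mul_eq hcomm K.charpoly
  rw [aeval_self_charpoly, Matrix.mul_zero] at hzero
  rw [← nonsing_inv_mul_cancel_left (A := aeval L K.charpoly) X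
    ((isUnit_iff_isUnit_det _).mp hunit), hzero, Matrix.mul_zero]

end Sylvester

theorem Matrix.spectrum_fromBlocks_zero {R p q : Type*} [CommRing R] [Fintype p] [DecidableEq p]
    [Fintype q] [DecidableEq q] (A : Matrix p p R) (D : Matrix q q R) :
    spectrum R (fromBlocks A 0 0 D) = spectrum R A ∪ spectrum R D := by
  ext μ
  have hμ : algebraMap R _ μ = fromBlocks (algebraMap R (Matrix p p R) μ) 0 0
      (algebraMap R (Matrix q q R) μ) := by
    simp only [Algebra.algebraMap_eq_smul_one, ← fromBlocks_one, fromBlocks_smul, smul_zero]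
  simp only [spectrum.mem_iff, Set.mem_union, hμ, sub_eq_add_neg, fromBlocks_neg, fromBlocks_add,
    neg_zero, add_zero, isUnit_fromBlocks_zero₂₁, not_and_or]

theorem Tpair_eq_univ_of_forall_exists_sylvester {p q : Type*} [Fintype p] [DecidableEq p]
    [Fintype q] [DecidableEq q] {H : Matrix p p ℂ} {H' : Matrix q q ℂ}
    (hH : IsUnit H) (hH' : IsUnit H')
    (hsyl : ∀ C : Matrix q p ℂ, ∃ R : Matrix q p ℂ,
      H'⁻¹ * H'ᴴ * R - R * (H⁻¹ * Hᴴ) = C) :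
    Tpair H H' = Set.univ := by
  refine Set.eq_univ_of_forall fun ⟨B, A⟩ => ?_
  obtain ⟨R, hR⟩ := hsyl (H'⁻¹ * (Aᴴ - B * (H⁻¹ * Hᴴ)))
  have hR' : H'ᴴ * R - H' * R * (H⁻¹ * Hᴴ) = Aᴴ - B * (H⁻¹ * Hᴴ) := by
    have := congrArg (H' * ·) hR
    simpa only [Matrix.mul_sub, ← Matrix.mul_assoc,
      mul_nonsing_inv _ ((isUnit_iff_isUnit_det _).mp hH'), Matrix.one_mul] using this
  refine ⟨((B - H' * R) * H⁻¹)ᴴ, R, Prod.ext ?_ ?_⟩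
  · rw [conjTranspose_conjTranspose, Matrix.mul_assoc,
      nonsing_inv_mul _ ((isUnit_iff_isUnit_det _).mp hH), Matrix.mul_one, sub_add_cancel]
  · apply conjTranspose_injective
    simp only [conjTranspose_add, conjTranspose_mul, conjTranspose_conjTranspose]
    rw [← eq_sub_iff_add_eq.mp hR', Matrix.mul_assoc _ H⁻¹, Matrix.sub_mul]
    abel

theorem Jmat_isUpperTriangular (k : ℕ) (l : ℂ) : (Jmat k l).IsUpperTriangular := by
  intro i j hij
  have hne : (i : ℕ) ≠ j := by simp only [id] at hij; omega
  have hsucc : (j : ℕ) ≠ i + 1 := by simp only [id] at hij; omega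
  simp [Jmat, hne, hsucc]

theorem charpoly_Jmat (k : ℕ) (l : ℂ) : (Jmat k l).charpoly = (X - C l) ^ k := by
  rw [charpoly_of_isUpperTriangular _ (Jmat_isUpperTriangular k l)]
  simp [Jmat]

theorem spectrum_Jmat_subset (k : ℕ) (l : ℂ) : spectrum ℂ (Jmat k l) ⊆ {l} := by
  intro μ hμ
  rw [mem_spectrum_iff_isRoot_charpoly, charpoly_Jmat, IsRoot.def, eval_pow, eval_sub, eval_X,
    eval_C] at hμ
  exact sub_eq_zero.mp (eq_zero_of_pow_eq_zero hμ)

theorem isUnit_Jmat (k : ℕ) {l : ℂ} (hl : l ≠ 0) : IsUnit (Jmat k l) :=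
  spectrum.zero_notMem_iff ℂ |>.mp fun h => hl (spectrum_Jmat_subset k l h).symm

theorem Matrix.spectrum_nonsing_inv {𝕜 n : Type*} [Field 𝕜] [Fintype n] [DecidableEq n]
    {A : Matrix n n 𝕜} (hA : IsUnit A) : spectrum 𝕜 A⁻¹ = (spectrum 𝕜 A)⁻¹ := by
  rw [← hA.unit_spec, ← coe_units_inv, spectrum.map_inv]

theorem spectrum_inv_Jmat_subset (k : ℕ) {l : ℂ} (hl : l ≠ 0) :
    spectrum ℂ (Jmat k l)⁻¹ ⊆ {l⁻¹} := by
  rw [spectrum_nonsing_inv (isUnit_Jmat k hl), ← Set.inv_singleton]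
  exact Set.inv_subset_inv.mpr (spectrum_Jmat_subset k l)

theorem spectrum_conjTranspose_Jmat_subset (k : ℕ) (l : ℂ) :
    spectrum ℂ (Jmat k l)ᴴ ⊆ {star l} := by
  rw [← star_eq_conjTranspose, spectrum.map_star, ← Set.star_singleton]
  exact Set.star_subset_star.mpr (spectrum_Jmat_subset k l)

theorem Hmat_mul_eq_one (m : ℕ) {l : ℂ} (hl : l ≠ 0) :
    Hmat m l * fromBlocks 0 (Jmat m l)⁻¹ 1 0 = 1 := by
  rw [Hmat, fromBlocks_multiply,
    mul_nonsing_inv _ ((isUnit_iff_isUnit_det _).mp (isUnit_Jmat m hl))]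
  simp [fromBlocks_one]

theorem isUnit_Hmat (m : ℕ) {l : ℂ} (hl : l ≠ 0) : IsUnit (Hmat m l) :=
  IsUnit.of_mul_eq_one _ (Hmat_mul_eq_one m hl)

theorem Hmat_inv_mul_conjTranspose (m : ℕ) {l : ℂ} (hl : l ≠ 0) :
    (Hmat m l)⁻¹ * (Hmat m l)ᴴ = fromBlocks (Jmat m l)⁻¹ 0 0 (Jmat m l)ᴴ := by
  rw [inv_eq_right_inv (Hmat_mul_eq_one m hl), Hmat, fromBlocks_conjTranspose, fromBlocks_multiply]
  simp

theorem spectrum_Hmat_inv_mul_conjTranspose_subset (m : ℕ) {l : ℂ} (hl : l ≠ 0) :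
    spectrum ℂ ((Hmat m l)⁻¹ * (Hmat m l)ᴴ) ⊆ {l⁻¹, star l} := by
  rw [Hmat_inv_mul_conjTranspose m hl, spectrum_fromBlocks_zero, Set.insert_eq]
  exact Set.union_subset_union (spectrum_inv_Jmat_subset m hl)
    (spectrum_conjTranspose_Jmat_subset m l)

theorem disjoint_inv_star_of_one_lt_norm {l l' : ℂ} (hl : 1 < ‖l‖) (hl' : 1 < ‖l'‖)
    (hne : l ≠ l') : Disjoint ({l'⁻¹, star l'} : Set ℂ) {l⁻¹, star l} := by
  have key : ∀ {a b : ℂ}, 1 < ‖a‖ → 1 < ‖b‖ → a⁻¹ ≠ star b := fun ha hb h => by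
    have := congrArg norm h
    rw [norm_inv, norm_star] at this
    linarith [inv_lt_one_of_one_lt₀ ha]
  simp only [Set.disjoint_insert_left, Set.disjoint_singleton_left, Set.mem_insert_iff,
    Set.mem_singleton_iff, _root_.inv_inj, star_inj]
  exact ⟨not_or.mpr ⟨Ne.symm hne, key hl' hl⟩,
    not_or.mpr ⟨fun h => key hl hl' h.symm, Ne.symm hne⟩⟩

theorem Tpair_Hmat_eq_univ (m n : ℕ) {l l' : ℂ} (hl : 1 < ‖l‖) (hl' : 1 < ‖l'‖)
    (hne : l ≠ l') :
    Tpair (Hmat m l) (Hmat n l') = Set.univ := by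
  have ne_zero : ∀ {a : ℂ}, 1 < ‖a‖ → a ≠ 0 := fun ha h => by simp [h] at ha; linarith
  refine Tpair_eq_univ_of_forall_exists_sylvester (isUnit_Hmat m (ne_zero hl))
    (isUnit_Hmat n (ne_zero hl')) fun C => exists_mul_sub_mul_eq_of_disjoint_spectrum ?_ C
  exact (disjoint_inv_star_of_one_lt_norm hl hl' hne).mono
    (spectrum_Hmat_inv_mul_conjTranspose_subset n (ne_zero hl'))
    (spectrum_Hmat_inv_mul_conjTranspose_subset m (ne_zero hl))

/-- For `|λ|, |λ'| > 1` and `λ ≠ λ'`: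
`T(H_m(λ), H_n(λ')) = ℂ^{2n×2m} × ℂ^{2m×2n}`. -/
theorem stmt11 (m n : ℕ) (l l' : ℂ)
    (hl : 1 < ‖l‖) (hl' : 1 < ‖l'‖) (hne : l ≠ l')
    (B : Matrix (Fin n ⊕ Fin n) (Fin m ⊕ Fin m) ℂ)
    (A : Matrix (Fin m ⊕ Fin m) (Fin n ⊕ Fin n) ℂ) :
    ∃ (S : Matrix (Fin m ⊕ Fin m) (Fin n ⊕ Fin n) ℂ)
      (R : Matrix (Fin n ⊕ Fin n) (Fin m ⊕ Fin m) ℂ),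
      B = Sᴴ * Hmat m l + Hmat n l' * R ∧
      A = Rᴴ * Hmat n l' + Hmat m l * S := by
  obtain ⟨S, R, h⟩ : (B, A) ∈ Tpair (Hmat m l) (Hmat n l') := by
    rw [Tpair_Hmat_eq_univ m n hl hl' hne]
    trivial
  exact ⟨S, R, Prod.ext_iff.mp h⟩
end

section
/- Let μ, ν ∈ ℂ with |μ| = |ν| = 1, μ ≠ ν and μ ≠ −ν. Then the map (S,R) ↦ (μ·S*·Δ_m + ν·Δ_n·R, ν·R*·Δ_n + μ·Δ_m·S), where S ∈ ℂ^{m×n} and R ∈ ℂ^{n×m}, is surjective onto ℂ^{n×m} × ℂ^{m×n}; equivalently, T(μΔ_m, νΔ_n) = ℂ^{n×m} × ℂ^{m×n}. -/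
open Matrix

/-!
The map `(R, S) ↦ (μ Sᴴ Δ_m + ν Δ_n R, ν Rᴴ Δ_n + μ Δ_m S)` is `ℝ`-linear on a
finite-dimensional space, so it is enough to show that its kernel is trivial. Write
`Δ = F (1 + i N)` with `F` the flip permutation matrix and `N` the nilpotent shift; then
`Δᴴ = F (1 - i N)`, so `Δ (1 - i N) = Δᴴ (1 + i N)`. Eliminating `R` from the two kernel
equations and cancelling `F` gives `(1 + P) S (1 - Q) = c (1 - P) S (1 + Q)` with
`P = i N_m`, `Q = i N_n` nilpotent and `c = (μ̄ ν)²`, and `c ≠ 1` because `μ ≠ ±ν`. The operator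
`X ↦ (1 + P) X (1 - Q) - c (1 - P) X (1 + Q)` is `1 - c` plus a nilpotent, hence invertible,
so `S = 0`; by symmetry `R = 0`.
-/

theorem Matrix.IsUpperTriangular.isNilpotent {n R : Type*} [Fintype n] [LinearOrder n]
    [CommRing R] {M : Matrix n n R} (hM : M.IsUpperTriangular) (hdiag : ∀ i, M i i = 0) :
    IsNilpotent M :=
  ⟨Fintype.card n, by
    simpa [charpoly_of_isUpperTriangular M hM, hdiag] using M.aeval_self_charpoly⟩

theorem Matrix.mulLeftLinearMap_pow {m n R : Type*} [Fintype m] [DecidableEq m] [CommSemiring R]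
    (P : Matrix m m R) (k : ℕ) : mulLeftLinearMap n R P ^ k = mulLeftLinearMap n R (P ^ k) := by
  induction k with
  | zero => ext; simp
  | succ k ih => rw [pow_succ, ih, pow_succ, mulLeftLinearMap_mul]; rfl

theorem Matrix.mulRightLinearMap_pow {m n R : Type*} [Fintype n] [DecidableEq n] [CommSemiring R]
    (Q : Matrix n n R) (k : ℕ) : mulRightLinearMap m R Q ^ k = mulRightLinearMap m R (Q ^ k) := by
  induction k with
  | zero => ext; simp
  | succ k ih => rw [pow_succ', ih, pow_succ, mulRightLinearMap_mul]; rfl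

theorem Matrix.isNilpotent_mulLeftLinearMap {m n R : Type*} [Fintype m] [DecidableEq m]
    [CommSemiring R] {P : Matrix m m R} (hP : IsNilpotent P) :
    IsNilpotent (mulLeftLinearMap n R P) := by
  obtain ⟨k, hk⟩ := hP
  exact ⟨k, by rw [mulLeftLinearMap_pow, hk, mulLeftLinearMap_zero_eq_zero]⟩

theorem Matrix.isNilpotent_mulRightLinearMap {m n R : Type*} [Fintype n] [DecidableEq n]
    [CommSemiring R] {Q : Matrix n n R} (hQ : IsNilpotent Q) :
    IsNilpotent (mulRightLinearMap m R Q) := by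
  obtain ⟨k, hk⟩ := hQ
  exact ⟨k, by rw [mulRightLinearMap_pow, hk, mulRightLinearMap_zero_eq_zero]⟩

theorem isUnit_one_add_mul_one_sub_sub_smul {K A : Type*} [Field K] [Ring A] [Algebra K A]
    {l r : A} (hl : IsNilpotent l) (hr : IsNilpotent r) (hlr : Commute l r) {c : K}
    (hc : c ≠ 1) : IsUnit ((1 + l) * (1 - r) - c • ((1 - l) * (1 + r))) := by
  have hsplit : (1 + l) * (1 - r) - c • ((1 - l) * (1 + r)) =
      algebraMap K A (1 - c) + ((1 + c) • (l - r) - (1 - c) • (l * r)) := by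
    rw [Algebra.algebraMap_eq_smul_one]
    simp only [mul_add, add_mul, mul_sub, sub_mul, one_mul, mul_one]
    module
  have hnil : IsNilpotent ((1 + c) • (l - r) - (1 - c) • (l * r)) := by
    have hcomm : Commute (l - r) (l * r) :=
      ((Commute.refl l).mul_right hlr).sub_left (hlr.symm.mul_right (Commute.refl r))
    exact ((hcomm.smul_left _).smul_right _).isNilpotent_sub
      ((hlr.isNilpotent_sub hl hr).smul _) ((hlr.isNilpotent_mul_left hr).smul _)
  rw [hsplit]
  exact hnil.isUnit_add_left_of_commute ((isUnit_iff_ne_zero.2 (sub_ne_zero.2 hc.symm)).map _)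
    (Algebra.commutes _ _).symm

theorem Matrix.eq_zero_of_one_add_mul_mul_one_sub_eq_smul {m n K : Type*} [Fintype m]
    [Fintype n] [DecidableEq m] [DecidableEq n] [Field K] {P : Matrix m m K}
    {Q : Matrix n n K} (hP : IsNilpotent P) (hQ : IsNilpotent Q) {c : K} (hc : c ≠ 1)
    {S : Matrix m n K} (hS : (1 + P) * S * (1 - Q) = c • ((1 - P) * S * (1 + Q))) : S = 0 := by
  set l := mulLeftLinearMap n K P
  set r := mulRightLinearMap m K Q
  have hT := isUnit_one_add_mul_one_sub_sub_smul (isNilpotent_mulLeftLinearMap hP)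
    (isNilpotent_mulRightLinearMap hQ)
    (commute_mulLeftLinearMap_mulRightLinearMap (R := K) P Q : Commute l r) hc
  have hTS : ((1 + l) * (1 - r) - c • ((1 - l) * (1 + r))) S = 0 := by
    simp only [LinearMap.sub_apply, LinearMap.smul_apply, Module.End.mul_apply,
      LinearMap.add_apply, Module.End.one_apply, l, r, mulLeftLinearMap_apply,
      mulRightLinearMap_apply]
    simp only [Matrix.mul_sub, Matrix.mul_add, Matrix.add_mul, Matrix.sub_mul, Matrix.one_mul,
      Matrix.mul_one, Matrix.mul_assoc] at hS ⊢
    linear_combination (norm := module) hS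
  exact (injective_iff_map_eq_zero _).1 ((Module.End.isUnit_iff _).1 hT).1 S hTS

noncomputable def shiftMat (n : ℕ) : Matrix (Fin n) (Fin n) ℂ :=
  of fun i j => if (j : ℕ) = i + 1 then 1 else 0

theorem isNilpotent_shiftMat (n : ℕ) : IsNilpotent (shiftMat n) :=
  IsUpperTriangular.isNilpotent (fun i j (hji : j < i) => if_neg (by omega))
    (fun i => if_neg (by omega))

theorem revPerm_permMatrix_mul_self (n : ℕ) :
    (Fin.revPerm : Equiv.Perm (Fin n)).permMatrix ℂ * Fin.revPerm.permMatrix ℂ = 1 := by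
  rw [← permMatrix_mul, show Fin.revPerm * Fin.revPerm = (1 : Equiv.Perm (Fin n)) from
    Equiv.ext Fin.rev_rev, permMatrix_one]

theorem Dmat_eq_permMatrix_mul (n : ℕ) :
    Dmat n = (Fin.revPerm : Equiv.Perm (Fin n)).permMatrix ℂ * (1 + Complex.I • shiftMat n) := by
  ext i j
  rw [PEquiv.toMatrix_toPEquiv_mul]
  simp only [Dmat, shiftMat, submatrix_apply, Matrix.add_apply, Matrix.smul_apply,
    Matrix.one_apply, of_apply, Fin.revPerm_apply, id, Fin.ext_iff, Fin.val_rev]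
  have := i.isLt
  have := j.isLt
  split_ifs <;> first | omega | simp

theorem conjTranspose_Dmat (n : ℕ) :
    (Dmat n)ᴴ = (Fin.revPerm : Equiv.Perm (Fin n)).permMatrix ℂ * (1 - Complex.I • shiftMat n) := by
  ext i j
  rw [PEquiv.toMatrix_toPEquiv_mul]
  simp only [Dmat, shiftMat, conjTranspose_apply, submatrix_apply, Matrix.sub_apply,
    Matrix.smul_apply, Matrix.one_apply, of_apply, Fin.revPerm_apply, id, Fin.ext_iff,
    Fin.val_rev]
  have := i.isLt
  have := j.isLt
  split_ifs <;> first | omega | simp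

theorem Dmat_mul_one_sub (n : ℕ) :
    Dmat n * (1 - Complex.I • shiftMat n) = (Dmat n)ᴴ * (1 + Complex.I • shiftMat n) := by
  rw [conjTranspose_Dmat, Dmat_eq_permMatrix_mul, Matrix.mul_assoc, Matrix.mul_assoc]
  congr 1
  generalize Complex.I • shiftMat n = X
  noncomm_ring

theorem eq_zero_of_smul_conjTranspose_Dmat_mul_eq {m n : ℕ} {c : ℂ} (hc : c ≠ 1)
    {S : Matrix (Fin m) (Fin n) ℂ}
    (h : c • ((Dmat m)ᴴ * S * (1 + Complex.I • shiftMat n)) =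
      Dmat m * S * (1 - Complex.I • shiftMat n)) : S = 0 := by
  refine eq_zero_of_one_add_mul_mul_one_sub_eq_smul ((isNilpotent_shiftMat m).smul Complex.I)
    ((isNilpotent_shiftMat n).smul Complex.I) hc
    (mul_right_injective_of_inv _ _ (revPerm_permMatrix_mul_self m) ?_)
  rw [conjTranspose_Dmat, Dmat_eq_permMatrix_mul] at h
  simp only [Matrix.mul_assoc, Matrix.mul_smul] at h ⊢
  exact h.symm

theorem sq_star_mul_ne_one {μ ν : ℂ} (hμ : star μ * μ = 1) (h₁ : μ ≠ ν) (h₂ : μ ≠ -ν) :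
    (star μ * ν) ^ 2 ≠ 1 := by
  have hν : ν = μ * (star μ * ν) := by linear_combination -ν * hμ
  intro h
  rcases sq_eq_one_iff.1 h with h | h
  · exact h₁ (by rw [hν, h, mul_one])
  · exact h₂ (by rw [hν, h, mul_neg_one, neg_neg])

theorem eq_zero_of_smul_Dmat_equations {m n : ℕ} {μ ν : ℂ} (hμ : ‖μ‖ = 1) (hν : ‖ν‖ = 1)
    (h₁ : μ ≠ ν) (h₂ : μ ≠ -ν) {S : Matrix (Fin m) (Fin n) ℂ} {R : Matrix (Fin n) (Fin m) ℂ}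
    (hS : Sᴴ * (μ • Dmat m) + (ν • Dmat n) * R = 0)
    (hR : Rᴴ * (ν • Dmat n) + (μ • Dmat m) * S = 0) : S = 0 := by
  have hμ' : star μ * μ = 1 := by simp [Complex.conj_mul', hμ]
  have hν' : star ν * ν = 1 := by simp [Complex.conj_mul', hν]
  set Q := Complex.I • shiftMat n
  have e₁ := congrArg (fun X => Xᴴ * (1 + Q)) hS
  have e₂ := congrArg (· * (1 - Q)) hR
  simp only [conjTranspose_add, conjTranspose_mul, conjTranspose_smul, conjTranspose_conjTranspose,
    conjTranspose_zero, Matrix.zero_mul, Matrix.add_mul, Matrix.smul_mul, Matrix.mul_smul,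
    Matrix.mul_assoc] at e₁ e₂
  rw [Dmat_mul_one_sub] at e₂
  refine eq_zero_of_smul_conjTranspose_Dmat_mul_eq (sq_star_mul_ne_one hμ' h₁ h₂) ?_
  simp only [Matrix.mul_assoc]
  set Y := Dmat m * (S * (1 - Q))
  set Z := Rᴴ * ((Dmat n)ᴴ * (1 + Q))
  -- `e₁` expresses `Z` through `X = Δ_mᴴ S (1 + Q)`; substituting into `e₂` gives `Y = c X`.
  linear_combination (norm := module) (ν * star μ * ν) • e₁ - star μ • e₂ + hμ' • Y -
    (star μ * ν * hν') • Z

def tangentPairMap {p q : Type*} [Fintype p] [Fintype q] (M : Matrix p p ℂ) (N : Matrix q q ℂ) :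
    (Matrix q p ℂ × Matrix p q ℂ) →ₗ[ℝ] (Matrix q p ℂ × Matrix p q ℂ) where
  toFun X := (X.2ᴴ * M + N * X.1, X.1ᴴ * N + M * X.2)
  map_add' X Y := by
    simp only [Prod.fst_add, Prod.snd_add, conjTranspose_add, Matrix.add_mul, Matrix.mul_add,
      Prod.mk_add_mk]
    abel_nf
  map_smul' r X := by
    simp only [Prod.smul_fst, Prod.smul_snd, conjTranspose_smul, star_trivial, Matrix.smul_mul,
      Matrix.mul_smul, RingHom.id_apply, Prod.smul_mk, smul_add]

/-- For `|μ| = |ν| = 1`, `μ ≠ ±ν`: `T(μΔ_m, νΔ_n) = ℂ^{n×m} × ℂ^{m×n}`. -/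
theorem stmt13 (m n : ℕ) (μ ν : ℂ)
    (hμ : ‖μ‖ = 1) (hν : ‖ν‖ = 1)
    (h1 : μ ≠ ν) (h2 : μ ≠ -ν)
    (B : Matrix (Fin n) (Fin m) ℂ) (A : Matrix (Fin m) (Fin n) ℂ) :
    ∃ (S : Matrix (Fin m) (Fin n) ℂ) (R : Matrix (Fin n) (Fin m) ℂ),
      B = Sᴴ * (μ • Dmat m) + (ν • Dmat n) * R ∧
      A = Rᴴ * (ν • Dmat n) + (μ • Dmat m) * S := by
  have h2' : ν ≠ -μ := fun h => h2 (by rw [h, neg_neg])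
  have hinj : Function.Injective (tangentPairMap (μ • Dmat m) (ν • Dmat n)) := by
    refine (injective_iff_map_eq_zero _).2 fun ⟨R, S⟩ h => ?_
    obtain ⟨hS, hR⟩ := Prod.mk_eq_zero.1 h
    exact Prod.ext (eq_zero_of_smul_Dmat_equations hν hμ h1.symm h2' hR hS)
      (eq_zero_of_smul_Dmat_equations hμ hν h1 h2 hS hR)
  obtain ⟨⟨R, S⟩, hRS⟩ := LinearMap.injective_iff_surjective.1 hinj (B, A)
  exact ⟨S, R, (congrArg Prod.fst hRS).symm, (congrArg Prod.snd hRS).symm⟩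
end
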